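/- arXiv:1810.12863 — 5 statements merged into one kernel-verified Lean document; each statement's English description precedes it below -/
import Mathlib

section
/- Let m ≥ 2 and let G be a graph with roots x_0, x_1 that has a rooted immersion of D_m with terminal set T. Suppose G has a segmentation X_0 ⊂ X_1 ⊂ … ⊂ X_k of width m such that x_0 ∈ X_0, |X_0| ≤ 2, and x_1 ∉ X_k. Then T ∩ X_k = {x_0}. -/
open scoped Classical

noncomputable section

namespace PaperW4

/-- A finite loopless undirected multigraph on ambient vertex type `V`:
a finite vertex set together with a multiset of (non-loop) edges supported on it. -/
structure MG (V : Type) where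
  verts : Finset V
  edges : Multiset (Sym2 V)
  edge_support : ∀ e ∈ edges, ∀ v ∈ e, v ∈ verts
  loopless : ∀ e ∈ edges, ¬ e.IsDiag

variable {V : Type} {W : Type}

/-- `δ_G(X)`: the edges of `G` with exactly one endpoint in `X`. -/
def cutEdges (G : MG V) (X : Finset V) : Multiset (Sym2 V) :=
  G.edges.filter fun e => ∃ u v, e = s(u, v) ∧ u ∈ X ∧ v ∉ X

/-- `d_G(X) = |δ_G(X)|`. -/
def dcut (G : MG V) (X : Finset V) : ℕ := (cutEdges G X).card

/-- The degree of a vertex: the number of edges incident with it. -/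
def deg (G : MG V) (v : V) : ℕ := (G.edges.filter fun e => v ∈ e).card

/-- `e_G(u,v)`: the number of edges joining `u` and `v`. -/
def emult (G : MG V) (u v : V) : ℕ := G.edges.count s(u, v)

/-- `G` is `k`-edge-connected: every edge-cut `δ(X)` with `∅ ≠ X ⊊ V(G)` has size `≥ k`. -/
def EdgeConn (G : MG V) (k : ℕ) : Prop :=
  ∀ X : Finset V, X ⊆ G.verts → X.Nonempty → X ≠ G.verts → k ≤ dcut G X

/-- `G` is internally `k`-edge-connected: every edge-cut with at least two vertices
on each side has size `≥ k`. -/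
def InternallyEdgeConn (G : MG V) (k : ℕ) : Prop :=
  ∀ X : Finset V, X ⊆ G.verts → 2 ≤ X.card → 2 ≤ (G.verts \ X).card → k ≤ dcut G X

/-- Every vertex has degree three. -/
def Cubic (G : MG V) : Prop := ∀ v ∈ G.verts, deg G v = 3

/-- The multiset of edges traversed by a walk, given as its list of vertices. -/
def walkEdges (l : List V) : Multiset (Sym2 V) :=
  (↑((l.zip l.tail).map fun p => s(p.1, p.2)) : Multiset (Sym2 V))

/-- `l` is (the vertex sequence of) a walk from `u` to `v`. -/
def IsWalk (l : List V) (u v : V) : Prop :=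
  l.head? = some u ∧ l.getLast? = some v

/-- `G` is connected: any two of its vertices are joined by a trail in `G`. -/
def Connected (G : MG V) : Prop :=
  ∀ u ∈ G.verts, ∀ v ∈ G.verts,
    ∃ l : List V, IsWalk l u v ∧ walkEdges l ≤ G.edges ∧ ∀ w ∈ l, w ∈ G.verts

/-- An immersion of the loopless multigraph with vertex type `W` and edge multiset `H`
into `G`, with terminal map `φ`: `φ` is injective, and to each edge `uv` of `H` is
assigned a walk in `G` from `φ u` to `φ v`, these walks being globally edge-disjoint. -/
def ImmersionVia (G : MG V) (H : Multiset (Sym2 W)) (φ : W → V) : Prop :=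
  Function.Injective φ ∧ (∀ w : W, φ w ∈ G.verts) ∧
  ∃ P : Multiset (Sym2 W × List V),
    P.map Prod.fst = H ∧
    (∀ p ∈ P, ∃ u v : W, p.1 = s(u, v) ∧ IsWalk p.2 (φ u) (φ v)) ∧
    (P.map fun p => walkEdges p.2).sum ≤ G.edges

/-- The edges of the wheel `W₄`: vertex `0` is the center, `1,2,3,4` the rim cycle. -/
def w4Edges : Multiset (Sym2 (Fin 5)) :=
  {s(0, 1), s(0, 2), s(0, 3), s(0, 4), s(1, 2), s(2, 3), s(3, 4), s(4, 1)}

/-- `G` has an immersion of `W₄`. -/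
def HasW4Immersion (G : MG V) : Prop :=
  ∃ φ : Fin 5 → V, ImmersionVia G w4Edges φ

/-- `G` (rooted at `x`) has a rooted immersion of `W₄`: one in which the
center of `W₄` corresponds to `x`. -/
def HasRootedW4Immersion (G : MG V) (x : V) : Prop :=
  ∃ φ : Fin 5 → V, φ 0 = x ∧ ImmersionVia G w4Edges φ

/-- The edges of `D_m`: roots are `0, 1`; vertices `2, 3` play the role of `y₀, y₁`;
there are `m - 2` parallel edges between the two roots. -/
def dmEdges (m : ℕ) : Multiset (Sym2 (Fin 4)) :=
  Multiset.replicate (m - 2) s(0, 1) + {s(0, 2), s(0, 3), s(1, 2), s(1, 3), s(2, 3)}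

/-- `G` with roots `x0, x1` has a rooted immersion of `D_m`. -/
def HasRootedDmImmersion (G : MG V) (m : ℕ) (x0 x1 : V) : Prop :=
  ∃ φ : Fin 4 → V, φ 0 = x0 ∧ φ 1 = x1 ∧ ImmersionVia G (dmEdges m) φ

/-- The edges of `K₄`. -/
def k4Edges : Multiset (Sym2 (Fin 4)) :=
  {s(0, 1), s(0, 2), s(0, 3), s(1, 2), s(1, 3), s(2, 3)}

/-- A nested chain of vertex sets `C 0 ⊂ C 1 ⊂ ⋯`, each obtained from the previous
by adding one vertex, all cuts having size exactly `k`. -/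
def SegChain (G : MG V) (n : ℕ) (C : Fin (n + 1) → Finset V) (k : ℕ) : Prop :=
  (∀ i, C i ⊆ G.verts) ∧
  (∀ i : Fin n, C i.castSucc ⊆ C i.succ ∧ (C i.succ \ C i.castSucc).card = 1) ∧
  (∀ i, dcut G (C i) = k)

/-- `G` has a segmentation of width `k` relative to `(X, Y)`. -/
def HasSegmentation (G : MG V) (X Y : Finset V) (k : ℕ) : Prop :=
  ∃ (n : ℕ) (C : Fin (n + 1) → Finset V),
    SegChain G n C k ∧ C 0 = X ∧ G.verts \ C (Fin.last n) = Y

/-- `λ_s(G) ≥ m`: every edge-cut separating `x0` from `x1` has size `≥ m`. -/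
def LamSGe (G : MG V) (x0 x1 : V) (m : ℕ) : Prop :=
  ∀ X : Finset V, X ⊆ G.verts → x0 ∈ X → x1 ∉ X → m ≤ dcut G X

/-- `λ_n(G) ≥ m`: every edge-cut not separating `x0` from `x1` has size `≥ m`. -/
def LamNGe (G : MG V) (x0 x1 : V) (m : ℕ) : Prop :=
  ∀ X : Finset V, X ⊆ G.verts → X.Nonempty → X ≠ G.verts →
    (x0 ∈ X ↔ x1 ∈ X) → m ≤ dcut G X

/-- `λ_n^i(G) ≥ m`: every internal edge-cut not separating `x0` from `x1` has size `≥ m`. -/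
def LamNiGe (G : MG V) (x0 x1 : V) (m : ℕ) : Prop :=
  ∀ X : Finset V, X ⊆ G.verts → 2 ≤ X.card → 2 ≤ (G.verts \ X).card →
    (x0 ∈ X ↔ x1 ∈ X) → m ≤ dcut G X

/-- The subgraph of `G` induced on `S`. -/
def induce (G : MG V) (S : Finset V) : MG V where
  verts := G.verts ∩ S
  edges := G.edges.filter fun e => ∀ v ∈ e, v ∈ S
  edge_support := by
    intro e he v hv
    rw [Multiset.mem_filter] at he
    exact Finset.mem_inter.mpr ⟨G.edge_support e he.1 v hv, he.2 v hv⟩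
  loopless := fun e he => G.loopless e (Multiset.mem_of_mem_filter he)

/-- `G` with the vertices of `S` (and all incident edges) deleted. -/
def deleteVerts (G : MG V) (S : Finset V) : MG V := induce G (G.verts \ S)

/-- `C` is (the vertex set of) a connected component of `G`. -/
def IsComponent (G : MG V) (C : Finset V) : Prop :=
  C ⊆ G.verts ∧ C.Nonempty ∧ Connected (induce G C) ∧
  ∀ e ∈ G.edges, (∃ v ∈ e, v ∈ C) → ∀ v ∈ e, v ∈ C

/-- `G` has type `A_m` with respect to roots `x0, x1`. -/
def TypeA (G : MG V) (m : ℕ) (x0 x1 : V) : Prop :=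
  ∃ X0 X1 : Finset V, x0 ∈ X0 ∧ x1 ∈ X1 ∧ X0.card ≤ 2 ∧ X1.card ≤ 2 ∧
    HasSegmentation G X0 X1 m

/-- The edges of the lobe of `G` (with roots `x0, x1`) corresponding to the
component `C` of `G ∖ {x0, x1}`: edges inside `C ∪ {x0, x1}` other than `x0x1`-edges. -/
def lobeEdges (G : MG V) (C : Finset V) (x0 x1 : V) : Multiset (Sym2 V) :=
  G.edges.filter fun e => (∀ v ∈ e, v ∈ insert x0 (insert x1 C)) ∧ e ≠ s(x0, x1)

/-- `G` has type `B_m` with respect to roots `x0, x1`. -/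
def TypeB (G : MG V) (m : ℕ) (x0 x1 : V) : Prop :=
  ∃ (k : ℕ) (C : Fin k → Finset V) (nL : Fin k → ℕ),
    Function.Injective C ∧
    (∀ D : Finset V, IsComponent (deleteVerts G {x0, x1}) D ↔ ∃ i, C i = D) ∧
    (∀ i : Fin k, 2 ≤ nL i ∧
      ∃ l : List V, l.Nodup ∧ IsWalk l x0 x1 ∧
        l.toFinset = insert x0 (insert x1 (C i)) ∧
        (2 ≤ (C i).card → nL i = 2) ∧
        lobeEdges G (C i) x0 x1 = nL i • walkEdges l) ∧
    emult G x0 x1 + ∑ i, nL i = m + 1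

/-- The edge multiset of a cycle of length `n` on the vertices `f 0, f 1, …`. -/
def cycleEdges (n : ℕ) (f : Fin n → V) : Multiset (Sym2 V) :=
  (Finset.univ.val : Multiset (Fin n)).map fun i =>
    s(f i, f ⟨(i.val + 1) % n, Nat.mod_lt _ i.pos⟩)

/-- `G` is a doubled cycle of length `n`. -/
def IsDoubledCycleLen (G : MG V) (n : ℕ) : Prop :=
  ∃ f : Fin n → V, Function.Injective f ∧ Finset.univ.image f = G.verts ∧
    G.edges = 2 • cycleEdges n f

/-- `G` is a doubled cycle. -/
def IsDoubledCycle (G : MG V) : Prop := ∃ n, 3 ≤ n ∧ IsDoubledCycleLen G n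

/-- The map collapsing all of `Y` to the vertex `y0` and fixing everything else. -/
def collapseFun (Y : Finset V) (y0 : V) : V → V := fun v => if v ∈ Y then y0 else v

/-- The image multigraph of `G` under a vertex map `f` (identification of vertices),
with any created loops deleted. -/
def mapGraph (f : V → V) (G : MG V) : MG V where
  verts := G.verts.image f
  edges := (G.edges.map (Sym2.map f)).filter fun e => ¬e.IsDiag
  edge_support := by
    intro e he v hv
    rw [Multiset.mem_filter] at he
    obtain ⟨he, -⟩ := he
    rw [Multiset.mem_map] at he
    obtain ⟨e', he', rfl⟩ := he
    rw [Sym2.mem_map] at hv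
    obtain ⟨u, hu, rfl⟩ := hv
    exact Finset.mem_image_of_mem f (G.edge_support e' he' u hu)
  loopless := by
    intro e he
    rw [Multiset.mem_filter] at he
    exact he.2

/-- `G[X]` is a chain of sausages of order `k` in `G`: identifying `V(G) ∖ X` to a
single vertex yields a doubled cycle of length `k + 1`. -/
def ChainOfSausages (G : MG V) (X : Finset V) (k : ℕ) : Prop :=
  X ⊆ G.verts ∧ X.card = k ∧ 2 ≤ k ∧
  ∃ y0 ∈ G.verts \ X,
    IsDoubledCycleLen (mapGraph (collapseFun (G.verts \ X) y0) G) (k + 1)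

/-- `G` is sausage reduced: it has no chain of sausages of order at least `3`. -/
def SausageReduced (G : MG V) : Prop :=
  ¬ ∃ (X : Finset V) (k : ℕ), 3 ≤ k ∧ ChainOfSausages G X k

/-- One sausage shortening step of a rooted graph: two adjacent vertices of a chain of
sausages of order at least three are identified, carrying the root along. -/
def RootedShortStep (p q : MG V × V) : Prop :=
  ∃ (X : Finset V) (k : ℕ) (a b : V),
    3 ≤ k ∧ ChainOfSausages p.1 X k ∧ a ∈ X ∧ b ∈ X ∧ a ≠ b ∧ s(a, b) ∈ p.1.edges ∧
    q.1 = mapGraph (fun v => if v = b then a else v) p.1 ∧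
    q.2 = (if p.2 = b then a else p.2)

/-- Deleting a single copy of the edge `e` from `G`. -/
def deleteEdge (G : MG V) (e : Sym2 V) : MG V where
  verts := G.verts
  edges := G.edges.erase e
  edge_support := fun e' he' => G.edge_support e' (Multiset.mem_of_mem_erase he')
  loopless := fun e' he' => G.loopless e' (Multiset.mem_of_mem_erase he')

/-- `G` has a tree-decomposition of width at most `k`. -/
def HasTreeDecomp (G : MG V) (k : ℕ) : Prop :=
  ∃ (ι : Type) (T : SimpleGraph ι) (B : ι → Finset V),
    T.IsTree ∧
    (∀ t, B t ⊆ G.verts) ∧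
    (∀ v ∈ G.verts, ∃ t, v ∈ B t) ∧
    (∀ e ∈ G.edges, ∃ t, ∀ v ∈ e, v ∈ B t) ∧
    (∀ v ∈ G.verts, (SimpleGraph.induce {t | v ∈ B t} T).Connected) ∧
    ∀ t, (B t).card ≤ k + 1

/-- The tree-width of `G`. -/
def treewidth (G : MG V) : ℕ := sInf { k | HasTreeDecomp G k }

/-- One subdivision step: an edge `uv` is replaced by a path `u - w - v`
through a new vertex `w`. -/
def SubdivStep (G H : MG V) : Prop :=
  ∃ u v w : V, s(u, v) ∈ G.edges ∧ w ∉ G.verts ∧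
    H.verts = insert w G.verts ∧
    H.edges = (G.edges.erase s(u, v)) + {s(u, w), s(w, v)}

/-- `H` is a subdivision of `G`. -/
def IsSubdivision (G H : MG V) : Prop := Relation.ReflTransGen SubdivStep G H

/-- `G`, rooted at `u`, has type 2 (for the rooted `W₄` theorem). -/
def TypeTwo (G : MG V) (u : V) : Prop :=
  ∃ W0 : Finset V, W0 ⊆ G.verts ∧ u ∉ W0 ∧ 1 ≤ W0.card ∧ W0.card ≤ 2 ∧
    ∃ w0 ∈ W0,
      ∃ n : ℕ, 3 ≤ n ∧
        ∃ f : Fin n → V,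
          Function.Injective f ∧
          Finset.univ.image f = (mapGraph (collapseFun W0 w0) G).verts ∧
          (∃ i, f i = u) ∧ (∃ j, f j = w0) ∧
          ((s(u, w0) ∉ cycleEdges n f ∧
              (mapGraph (collapseFun W0 w0) G).edges =
                2 • cycleEdges n f + {s(u, w0)}) ∨
           (∃ v : V, s(u, v) ∈ cycleEdges n f ∧ s(v, w0) ∈ cycleEdges n f ∧
              (mapGraph (collapseFun W0 w0) G).edges =
                2 • cycleEdges n f + {s(u, v), s(v, w0)}) ∨
           (s(u, w0) ∈ cycleEdges n f ∧
              (mapGraph (collapseFun W0 w0) G).edges =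
                2 • cycleEdges n f + {s(u, w0)}))

section Stmt4Aux

variable {V : Type}

private lemma walk_cross (X : Finset V) :
    ∀ (l : List V) (a b : V), IsWalk l a b → ¬(a ∈ X ↔ b ∈ X) →
      ∃ e ∈ walkEdges l, ∃ u v, e = s(u, v) ∧ u ∈ X ∧ v ∉ X := by
  intro l
  induction l with
  | nil => intro a b h hx; obtain ⟨hh, _⟩ := h; simp at hh
  | cons c t ih =>
    intro a b h hx
    obtain ⟨hh, hl⟩ := h
    have hca : c = a := by simpa using hh
    subst hca
    cases t with
    | nil =>
      have hb : c = b := by simpa using hl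
      subst hb
      exact absurd Iff.rfl hx
    | cons d t' =>
      have hEdges : walkEdges (c :: d :: t') = s(c, d) ::ₘ walkEdges (d :: t') := by
        simp [walkEdges]
      by_cases hcd : (c ∈ X ↔ d ∈ X)
      · have hdb : ¬(d ∈ X ↔ b ∈ X) := fun hh' => hx (hcd.trans hh')
        have hw : IsWalk (d :: t') d b :=
          ⟨rfl, by rw [List.getLast?_cons_cons] at hl; exact hl⟩
        obtain ⟨e, he, hp⟩ := ih d b hw hdb
        exact ⟨e, by rw [hEdges]; exact Multiset.mem_cons_of_mem he, hp⟩
      · refine ⟨s(c, d), by rw [hEdges]; exact Multiset.mem_cons_self _ _, ?_⟩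
        by_cases hc : c ∈ X
        · refine ⟨c, d, rfl, hc, fun hd' => hcd ⟨fun _ => hd', fun _ => hc⟩⟩
        · have hd' : d ∈ X := by
            by_contra hdn
            exact hcd ⟨fun h' => absurd h' hc, fun h' => absurd h' hdn⟩
          exact ⟨d, c, Sym2.eq_swap, hd', hc⟩

private lemma aux_sum_le {α : Type} (q : α → Prop) [DecidablePred q] (g : α → ℕ)
    (P : Multiset α) (h : ∀ p ∈ P, q p → 1 ≤ g p) :
    Multiset.countP q P ≤ (P.map g).sum := by
  induction P using Multiset.induction with
  | empty => simp
  | cons a s ih =>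
    rw [Multiset.countP_cons, Multiset.map_cons, Multiset.sum_cons]
    have h2 := ih (fun p hp hq => h p (Multiset.mem_cons_of_mem hp) hq)
    by_cases hq : q a
    · rw [if_pos hq]
      have h1 := h a (Multiset.mem_cons_self a s) hq
      omega
    · rw [if_neg hq]; omega

private lemma aux_countP_sum {α W : Type} (pred : Sym2 W → Prop) [DecidablePred pred]
    (f : α → Multiset (Sym2 W)) (P : Multiset α) :
    (P.map fun p => Multiset.countP pred (f p)).sum =
      Multiset.countP pred (P.map f).sum := by
  induction P using Multiset.induction with
  | empty => simp
  | cons a s ih => simp [Multiset.countP_add, ih]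

private lemma key_iff (G : MG V) (m : ℕ) (hm : 2 ≤ m) (φ : Fin 4 → V)
    (himm : ImmersionVia G (dmEdges m) φ) (X : Finset V)
    (h0 : φ 0 ∈ X) (h1 : φ 1 ∉ X) (hd : dcut G X = m) :
    (φ 2 ∈ X ↔ φ 3 ∈ X) := by
  by_contra hne
  obtain ⟨hinj, hvert, P, hfst, hwalk, hle⟩ := himm
  set pred : Sym2 V → Prop := fun e => ∃ u v, e = s(u, v) ∧ u ∈ X ∧ v ∉ X with hpred
  set crossE : Sym2 (Fin 4) → Prop :=
    fun e => ∃ u v, e = s(u, v) ∧ ¬(φ u ∈ X ↔ φ v ∈ X) with hcrossE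
  have yesCross : ∀ a b : Fin 4, ¬(φ a ∈ X ↔ φ b ∈ X) → crossE s(a, b) :=
    fun a b h => ⟨a, b, rfl, h⟩
  have noCross : ∀ a b : Fin 4, (φ a ∈ X ↔ φ b ∈ X) → ¬ crossE s(a, b) := by
    rintro a b hab ⟨u, v, he, hn⟩
    rcases Sym2.eq_iff.mp he with ⟨hu, hv⟩ | ⟨hu, hv⟩
    · subst hu; subst hv; exact hn hab
    · subst hu; subst hv; exact hn hab.symm
  -- upper bound
  have hA : ∀ p ∈ P, crossE p.1 → 1 ≤ Multiset.countP pred (walkEdges p.2) := by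
    rintro p hp ⟨u, v, he, hn⟩
    obtain ⟨u', v', he', hw⟩ := hwalk p hp
    have hsym : ¬(φ u' ∈ X ↔ φ v' ∈ X) := by
      rcases Sym2.eq_iff.mp (he.symm.trans he') with ⟨hu, hv⟩ | ⟨hu, hv⟩
      · subst hu; subst hv; exact hn
      · subst hu; subst hv; exact fun h => hn h.symm
    obtain ⟨e, hemem, hpe⟩ := walk_cross X p.2 (φ u') (φ v') hw hsym
    have := Multiset.countP_pos_of_mem (p := pred) hemem hpe
    omega
  have hB := aux_sum_le (fun p => crossE p.1)
    (fun p => Multiset.countP pred (walkEdges p.2)) P hA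
  have hC := aux_countP_sum pred (fun p => walkEdges p.2) P
  have hD : Multiset.countP pred ((P.map fun p => walkEdges p.2).sum) ≤
      Multiset.countP pred G.edges := Multiset.countP_le_of_le _ hle
  have hE : Multiset.countP pred G.edges = m := by
    rw [Multiset.countP_eq_card_filter, ← hd]; rfl
  -- lower bound
  have hF : Multiset.countP crossE (dmEdges m) = Multiset.countP (fun p => crossE p.1) P := by
    rw [← hfst, Multiset.countP_map, Multiset.countP_eq_card_filter]
  have hrep : ∀ k, Multiset.countP crossE (Multiset.replicate k s((0 : Fin 4), 1)) = k := by
    have hc : crossE s((0 : Fin 4), 1) :=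
      yesCross 0 1 (fun h => h1 (h.mp h0))
    intro k
    induction k with
    | zero => simp
    | succ k ih => simp [Multiset.replicate_succ, Multiset.countP_cons, hc, ih]
  have hfive : Multiset.countP crossE
      ({s((0 : Fin 4), 2), s(0, 3), s(1, 2), s(1, 3), s(2, 3)} : Multiset (Sym2 (Fin 4))) = 3 := by
    have hexp : ({s((0 : Fin 4), 2), s(0, 3), s(1, 2), s(1, 3), s(2, 3)} : Multiset (Sym2 (Fin 4)))
        = s((0 : Fin 4), 2) ::ₘ s(0, 3) ::ₘ s(1, 2) ::ₘ s(1, 3) ::ₘ {s(2, 3)} := rfl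
    rw [hexp, Multiset.countP_cons, Multiset.countP_cons, Multiset.countP_cons,
      Multiset.countP_cons]
    have h23 : crossE s((2 : Fin 4), 3) := yesCross 2 3 hne
    by_cases h2 : φ 2 ∈ X
    · have h3 : φ 3 ∉ X := fun h3 => hne ⟨fun _ => h3, fun _ => h2⟩
      rw [if_neg (noCross 0 2 (iff_of_true h0 h2)),
        if_pos (yesCross 0 3 (fun h => h3 (h.mp h0))),
        if_pos (yesCross 1 2 (fun h => h1 (h.mpr h2))),
        if_neg (noCross 1 3 (iff_of_false h1 h3))]
      have : Multiset.countP crossE ({s((2 : Fin 4), 3)} : Multiset (Sym2 (Fin 4))) = 1 := by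
        rw [show ({s((2 : Fin 4), 3)} : Multiset (Sym2 (Fin 4))) = s((2 : Fin 4), 3) ::ₘ 0 from rfl,
          Multiset.countP_cons, if_pos h23]
        simp
      omega
    · have h3 : φ 3 ∈ X := by
        by_contra h3
        exact hne ⟨fun h => absurd h h2, fun h => absurd h h3⟩
      rw [if_pos (yesCross 0 2 (fun h => h2 (h.mp h0))),
        if_neg (noCross 0 3 (iff_of_true h0 h3)),
        if_neg (noCross 1 2 (iff_of_false h1 h2)),
        if_pos (yesCross 1 3 (fun h => h1 (h.mpr h3)))]
      have : Multiset.countP crossE ({s((2 : Fin 4), 3)} : Multiset (Sym2 (Fin 4))) = 1 := by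
        rw [show ({s((2 : Fin 4), 3)} : Multiset (Sym2 (Fin 4))) = s((2 : Fin 4), 3) ::ₘ 0 from rfl,
          Multiset.countP_cons, if_pos h23]
        simp
      omega
  have hG : Multiset.countP crossE (dmEdges m) = m + 1 := by
    rw [dmEdges, Multiset.countP_add, hrep, hfive]
    omega
  have hfinal : m + 1 ≤ m := by
    calc m + 1 = Multiset.countP crossE (dmEdges m) := hG.symm
    _ = Multiset.countP (fun p => crossE p.1) P := hF
    _ ≤ (P.map fun p => Multiset.countP pred (walkEdges p.2)).sum := hB
    _ = Multiset.countP pred (P.map fun p => walkEdges p.2).sum := hC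
    _ ≤ Multiset.countP pred G.edges := hD
    _ = m := hE
  omega

end Stmt4Aux

/-- Let `m ≥ 2` and let `G` be a graph with roots `x0, x1` having a
rooted immersion of `D_m` with terminal set `T` (the image of the injection `φ`).
Suppose `G` has a segmentation `C 0 ⊂ C 1 ⊂ … ⊂ C n` of width `m` with `x0 ∈ C 0`,
`|C 0| ≤ 2` and `x1 ∉ C n`.  Then `T ∩ C n = {x0}`. -/
theorem statement_4 {V : Type} (G : MG V) (m : ℕ) (hm : 2 ≤ m) (x0 x1 : V)
    (hne : x0 ≠ x1) (hx0 : x0 ∈ G.verts) (hx1 : x1 ∈ G.verts)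
    (φ : Fin 4 → V) (h0 : φ 0 = x0) (h1 : φ 1 = x1)
    (himm : ImmersionVia G (dmEdges m) φ)
    (n : ℕ) (C : Fin (n + 1) → Finset V) (hseg : SegChain G n C m)
    (hx0C : x0 ∈ C 0) (hC0 : (C 0).card ≤ 2) (hx1C : x1 ∉ C (Fin.last n)) :
    (Finset.univ.image φ) ∩ C (Fin.last n) = {x0} := by
  obtain ⟨hCsub, hCstep, hCcut⟩ := hseg
  have hmono : Monotone C := Fin.monotone_iff_le_succ.mpr fun i => (hCstep i).1
  have hx0j : ∀ j, x0 ∈ C j := fun j => hmono (Fin.zero_le j) hx0C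
  have hx1j : ∀ j, x1 ∉ C j := fun j h => hx1C (hmono (Fin.le_last j) h)
  have hiff : ∀ j, (φ 2 ∈ C j ↔ φ 3 ∈ C j) := fun j =>
    key_iff G m hm φ himm (C j) (by rw [h0]; exact hx0j j)
      (by rw [h1]; exact hx1j j) (hCcut j)
  have hinj := himm.1
  have h02 : φ 0 ≠ φ 2 := fun h => by have := hinj h; simp at this
  have h03 : φ 0 ≠ φ 3 := fun h => by have := hinj h; simp at this
  have h23 : φ 2 ≠ φ 3 := fun h => by have := hinj h; simp at this
  have hnot : ∀ j, φ 2 ∉ C j ∧ φ 3 ∉ C j := by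
    intro j
    induction j using Fin.induction with
    | zero =>
      suffices h2 : φ 2 ∉ C 0 by
        exact ⟨h2, fun h3 => h2 ((hiff 0).mpr h3)⟩
      intro h2
      have h3 := (hiff 0).mp h2
      have hsub : ({x0, φ 2, φ 3} : Finset V) ⊆ C 0 := by
        intro v hv
        simp only [Finset.mem_insert, Finset.mem_singleton] at hv
        rcases hv with rfl | rfl | rfl
        · exact hx0C
        · exact h2
        · exact h3
      have hcard : ({x0, φ 2, φ 3} : Finset V).card = 3 := by
        rw [Finset.card_insert_of_notMem, Finset.card_insert_of_notMem,
          Finset.card_singleton]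
        · simpa using h23
        · simp only [Finset.mem_insert, Finset.mem_singleton]
          rw [← h0]
          push_neg
          exact ⟨h02, h03⟩
      have := Finset.card_le_card hsub
      omega
    | succ i ih =>
      suffices h2 : φ 2 ∉ C i.succ by
        exact ⟨h2, fun h3 => h2 ((hiff i.succ).mpr h3)⟩
      intro h2
      have h3 := (hiff i.succ).mp h2
      obtain ⟨hsub, hcard1⟩ := hCstep i
      obtain ⟨w, hw⟩ := Finset.card_eq_one.mp hcard1
      have h2' : φ 2 ∈ C i.succ \ C i.castSucc := Finset.mem_sdiff.mpr ⟨h2, ih.1⟩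
      have h3' : φ 3 ∈ C i.succ \ C i.castSucc := Finset.mem_sdiff.mpr ⟨h3, ih.2⟩
      rw [hw, Finset.mem_singleton] at h2' h3'
      exact h23 (h2'.trans h3'.symm)
  ext v
  simp only [Finset.mem_inter, Finset.mem_image, Finset.mem_univ, true_and,
    Finset.mem_singleton]
  constructor
  · rintro ⟨⟨i, rfl⟩, hv⟩
    fin_cases i
    · exact h0
    · exact absurd hv (show φ 1 ∉ C (Fin.last n) by rw [h1]; exact hx1C)
    · exact absurd hv (hnot _).1
    · exact absurd hv (hnot _).2
  · rintro rfl
    exact ⟨⟨0, h0⟩, hx0j _⟩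

end PaperW4
end
end

section
/- Let m ≥ 2 and let G be a graph with roots x_0, x_1 that has a rooted immersion of D_m. If d(x_0) and m have different parity, then there is an edge e of G incident with x_0 such that G − e still has a rooted immersion of D_m. -/
open scoped Classical

noncomputable section

namespace PaperW4

variable {V : Type} {W : Type}

-- ### auxiliary lemmas

lemma walk_parity (x0 : V) : ∀ (l : List V) (u v : V), IsWalk l u v →
    (∀ e ∈ walkEdges l, ¬ e.IsDiag) →
    ((walkEdges l).filter (fun e => x0 ∈ e)).card % 2
      = ((if u = x0 then 1 else 0) + (if v = x0 then 1 else 0)) % 2 := by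
  intro l
  induction l with
  | nil => intro u v h; simp [IsWalk] at h
  | cons a rest ih =>
    rcases rest with _ | ⟨b, rest⟩
    · intro u v h _
      obtain ⟨h1, h2⟩ := h
      simp only [List.head?_cons, Option.some.injEq] at h1
      simp only [List.getLast?_singleton, Option.some.injEq] at h2
      subst h1; subst h2
      have hz : walkEdges [a] = 0 := rfl
      rw [hz]
      by_cases hu : a = x0 <;> simp [hu]
    · intro u v h hnd
      obtain ⟨h1, h2⟩ := h
      simp only [List.head?_cons, Option.some.injEq] at h1
      subst h1
      rw [List.getLast?_cons_cons] at h2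
      have hw : walkEdges (a :: b :: rest) = s(a, b) ::ₘ walkEdges (b :: rest) := rfl
      have hab : a ≠ b := by
        have := hnd s(a, b) (by rw [hw]; exact Multiset.mem_cons_self _ _)
        simpa using this
      have hih := ih b v ⟨rfl, h2⟩ (fun e he => hnd e (by rw [hw]; exact Multiset.mem_cons_of_mem he))
      have hsplit : ((walkEdges (a :: b :: rest)).filter (fun e => x0 ∈ e)).card
          = (if x0 ∈ s(a, b) then 1 else 0)
            + ((walkEdges (b :: rest)).filter (fun e => x0 ∈ e)).card := by
        rw [hw, Multiset.filter_cons, Multiset.card_add]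
        by_cases hx : x0 ∈ s(a, b) <;> simp [hx]
      have hindval : (if x0 ∈ s(a, b) then (1 : ℕ) else 0)
          = (if a = x0 then 1 else 0) + (if b = x0 then 1 else 0) := by
        by_cases ha : a = x0 <;> by_cases hb : b = x0
        · exact absurd (ha.trans hb.symm) hab
        · simp [Sym2.mem_iff, ha, hb]
        · simp [Sym2.mem_iff, ha, hb]
        · have hno : ¬(x0 = a ∨ x0 = b) := by
            rintro (h | h)
            · exact ha h.symm
            · exact hb h.symm
          simp [Sym2.mem_iff, hno, ha, hb]
      rw [hsplit, hindval]
      omega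

lemma sum_parity (x0 : V) (φ : Fin 4 → V) (hinj : Function.Injective φ) (hφ0 : φ 0 = x0) :
    ∀ P : Multiset (Sym2 (Fin 4) × List V),
    (∀ p ∈ P, ¬ p.1.IsDiag) →
    (∀ p ∈ P, ∃ u v, p.1 = s(u, v) ∧ IsWalk p.2 (φ u) (φ v)) →
    (∀ p ∈ P, ∀ e ∈ walkEdges p.2, ¬ e.IsDiag) →
    (((P.map fun p => walkEdges p.2).sum.filter (fun e => x0 ∈ e)).card) % 2
      = ((P.map fun p => if (0 : Fin 4) ∈ p.1 then 1 else 0).sum) % 2 := by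
  intro P
  induction P using Multiset.induction_on with
  | empty => intro _ _ _; simp
  | cons p P ih =>
    intro hnd hwalk hend
    have ih' := ih (fun q hq => hnd q (Multiset.mem_cons_of_mem hq))
      (fun q hq => hwalk q (Multiset.mem_cons_of_mem hq))
      (fun q hq => hend q (Multiset.mem_cons_of_mem hq))
    obtain ⟨u, v, hp, hw⟩ := hwalk p (Multiset.mem_cons_self _ _)
    have huv : u ≠ v := by
      have := hnd p (Multiset.mem_cons_self _ _); rw [hp] at this; simpa using this
    have hpar := walk_parity x0 p.2 (φ u) (φ v) hw (hend p (Multiset.mem_cons_self _ _))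
    have hu : (φ u = x0) ↔ (u = 0) := by rw [← hφ0]; exact ⟨fun h => hinj h, fun h => by rw [h]⟩
    have hv : (φ v = x0) ↔ (v = 0) := by rw [← hφ0]; exact ⟨fun h => hinj h, fun h => by rw [h]⟩
    have hind : ((if φ u = x0 then 1 else 0) + (if φ v = x0 then 1 else 0)) % 2
        = (if (0 : Fin 4) ∈ p.1 then 1 else 0) % 2 := by
      rw [hp]
      simp only [hu, hv, Sym2.mem_iff]
      by_cases h0 : u = 0 <;> by_cases h1 : v = 0 <;>
        simp [h0, h1, eq_comm]
      exact absurd (h0.trans h1.symm) huv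
    rw [Multiset.map_cons, Multiset.map_cons, Multiset.sum_cons, Multiset.sum_cons,
      Multiset.filter_add, Multiset.card_add]
    omega

lemma dm_nondiag (m : ℕ) : ∀ e ∈ dmEdges m, ¬ e.IsDiag := by
  intro e he
  rw [dmEdges, Multiset.mem_add] at he
  rcases he with h | h
  · rw [Multiset.eq_of_mem_replicate h]; decide
  · revert h; revert e; decide

lemma dm_sum (m : ℕ) (hm : 2 ≤ m) :
    ((dmEdges m).map fun e => if (0 : Fin 4) ∈ e then 1 else 0).sum = m := by
  rw [dmEdges, Multiset.map_add, Multiset.sum_add, Multiset.map_replicate,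
    Multiset.sum_replicate]
  have h1 : (if (0 : Fin 4) ∈ (s(0,1) : Sym2 (Fin 4)) then 1 else 0) = 1 := by decide
  have h2 : ((({s(0,2), s(0,3), s(1,2), s(1,3), s(2,3)} : Multiset (Sym2 (Fin 4)))).map
      fun e => if (0 : Fin 4) ∈ e then 1 else 0).sum = 2 := by decide
  rw [h1, h2, smul_eq_mul, mul_one]
  omega

/-- Let `m ≥ 2` and let `G` be a graph with roots `x0, x1` that has
a rooted immersion of `D_m`.  If `d(x0)` and `m` have different parity, then there is
an edge `e` of `G` incident with `x0` such that `G - e` still has a rooted immersion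
of `D_m`. -/
theorem statement_5 {V : Type} (G : MG V) (m : ℕ) (hm : 2 ≤ m) (x0 x1 : V)
    (hne : x0 ≠ x1) (hx0 : x0 ∈ G.verts) (hx1 : x1 ∈ G.verts)
    (himm : HasRootedDmImmersion G m x0 x1)
    (hpar : deg G x0 % 2 ≠ m % 2) :
    ∃ e ∈ G.edges, x0 ∈ e ∧ HasRootedDmImmersion (deleteEdge G e) m x0 x1 := by
  obtain ⟨φ, hφ0, hφ1, hinj, hmem, P, hPfst, hPwalk, hPle⟩ := himm
  set S := (P.map fun p => walkEdges p.2).sum with hS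
  have hpnd : ∀ p ∈ P, ¬ p.1.IsDiag := by
    intro p hp
    have : p.1 ∈ P.map Prod.fst := Multiset.mem_map_of_mem _ hp
    rw [hPfst] at this
    exact dm_nondiag m _ this
  have hend : ∀ p ∈ P, ∀ e ∈ walkEdges p.2, ¬ e.IsDiag := by
    intro p hp e he
    have heS : e ∈ S := by
      refine Multiset.mem_of_le (Multiset.le_sum_of_mem ?_) he
      exact Multiset.mem_map_of_mem _ hp
    exact G.loopless e (Multiset.mem_of_le hPle heS)
  have hcard := sum_parity x0 φ hinj hφ0 P hpnd hPwalk hend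
  have hsum : (P.map fun p => if (0 : Fin 4) ∈ p.1 then 1 else 0).sum = m := by
    have : (P.map fun p => if (0 : Fin 4) ∈ p.1 then 1 else 0)
        = (P.map Prod.fst).map fun e => if (0 : Fin 4) ∈ e then 1 else 0 := by
      rw [Multiset.map_map]; rfl
    rw [this, hPfst, dm_sum m hm]
  rw [hsum] at hcard
  set used := S.filter (fun e => x0 ∈ e) with hused
  set inc := G.edges.filter (fun e => x0 ∈ e) with hinc
  have hle : used ≤ inc := Multiset.filter_le_filter _ hPle
  have hdeg : deg G x0 = inc.card := rfl
  have hneq : used ≠ inc := by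
    intro h
    rw [h] at hcard
    rw [hdeg] at hpar
    omega
  obtain ⟨e, he⟩ := Multiset.lt_iff_cons_le.mp (lt_of_le_of_ne hle hneq)
  have heinc : e ∈ inc := Multiset.mem_of_le he (Multiset.mem_cons_self _ _)
  rw [hinc, Multiset.mem_filter] at heinc
  obtain ⟨heG, hex0⟩ := heinc
  refine ⟨e, heG, hex0, φ, hφ0, hφ1, hinj, hmem, P, hPfst, hPwalk, ?_⟩
  have hcount : used.count e + 1 ≤ inc.count e := by
    have := Multiset.le_iff_count.mp he e
    simpa using this
  rw [Multiset.le_iff_count]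
  intro f
  show S.count f ≤ ((deleteEdge G e).edges).count f
  by_cases hf : f = e
  · subst hf
    have h1 : used.count f = S.count f := by
      rw [hused, Multiset.count_filter, if_pos hex0]
    have h2 : inc.count f = G.edges.count f := by
      rw [hinc, Multiset.count_filter, if_pos hex0]
    have h3 : ((deleteEdge G f).edges).count f = G.edges.count f - 1 :=
      Multiset.count_erase_self f G.edges
    omega
  · have h3 : ((deleteEdge G e).edges).count f = G.edges.count f :=
      Multiset.count_erase_of_ne hf G.edges
    rw [h3]
    exact Multiset.le_iff_count.mp hPle f


end PaperW4
end
end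

section
/- Suppose a graph G has a segmentation of width k relative to (X, Y), where |X| = 2 and some x ∈ X has d(x) = k. Then G has a segmentation of width k relative to ({x}, Y). -/
open scoped Classical

noncomputable section

namespace PaperW4

variable {V : Type} {W : Type}

lemma dcut_singleton' (G : MG V) (x : V) : dcut G {x} = deg G x := by
  unfold dcut deg cutEdges
  congr 1
  apply Multiset.filter_congr
  intro e he
  constructor
  · rintro ⟨u, v, rfl, hu, -⟩
    simp only [Finset.mem_singleton] at hu
    subst hu; exact Sym2.mem_mk_left _ _
  · intro hx
    obtain ⟨v, rfl⟩ := Sym2.mem_iff_exists.mp hx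
    refine ⟨x, v, rfl, Finset.mem_singleton_self x, ?_⟩
    simp only [Finset.mem_singleton]
    intro h; subst h
    exact G.loopless _ he (Sym2.isDiag_iff_proj_eq |>.mpr rfl)

/-- Suppose a graph `G` has a segmentation of width `k` relative to
`(X, Y)`, where `|X| = 2` and some `x ∈ X` has `d(x) = k`.  Then `G` has a
segmentation of width `k` relative to `({x}, Y)`. -/
theorem statement_6 {V : Type} (G : MG V) (X Y : Finset V) (k : ℕ)
    (hseg : HasSegmentation G X Y k) (hX : X.card = 2)
    (x : V) (hx : x ∈ X) (hdeg : deg G x = k) :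
    HasSegmentation G {x} Y k := by
  obtain ⟨n, C, ⟨hsub, hstep, hcut⟩, hC0, hlast⟩ := hseg
  refine ⟨n + 1, Fin.cons {x} C, ⟨?_, ?_, ?_⟩, Fin.cons_zero _ _, ?_⟩
  · intro i
    refine Fin.cases ?_ ?_ i
    · rw [Fin.cons_zero]
      simpa using (hsub 0) (hC0 ▸ hx)
    · intro j; rw [Fin.cons_succ]; exact hsub j
  · intro i
    refine Fin.cases ?_ ?_ i
    · constructor
      · rw [show (0 : Fin (n+1)).castSucc = 0 from rfl, Fin.cons_zero,
          show (0 : Fin (n+1)).succ = Fin.succ 0 from rfl, Fin.cons_succ, hC0]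
        simpa using hx
      · rw [show (0 : Fin (n+1)).castSucc = 0 from rfl, Fin.cons_zero,
          show (0 : Fin (n+1)).succ = Fin.succ 0 from rfl, Fin.cons_succ, hC0]
        rw [Finset.card_sdiff_of_subset (by simpa using hx)]
        simp [hX]
    · intro j
      have h1 : (j.succ).castSucc = (j.castSucc).succ := by
        ext; simp
      rw [h1, Fin.cons_succ, Fin.cons_succ]
      exact hstep j
  · intro i
    refine Fin.cases ?_ ?_ i
    · rw [Fin.cons_zero, dcut_singleton', hdeg]
    · intro j; rw [Fin.cons_succ]; exact hcut j
  · rw [show Fin.last (n+1) = (Fin.last n).succ from rfl, Fin.cons_succ]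
    exact hlast

end PaperW4
end
end

section
/- Let m ≥ 2 and let G be a rooted graph with roots x_0, x_1 such that |V(G)| ≥ 4, λ_n(G) ≥ 3, λ_n^i(G) ≥ 4, and λ_s(G) ≥ m. If G has type A_m or type B_m, then G has no rooted immersion of D_m. -/
open scoped Classical

noncomputable section

namespace PaperW4

variable {V : Type} {W : Type}

/-! ### Auxiliary machinery for Statement 10 -/

section Stmt10Aux

variable {V : Type}

/-- The cut predicate used in `cutEdges`. -/
def sepp (X : Finset V) (e : Sym2 V) : Prop := ∃ u v, e = s(u, v) ∧ u ∈ X ∧ v ∉ X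

/-- Number of edges of `s` crossing the cut `X`. -/
def crossN (X : Finset V) (s : Multiset (Sym2 V)) : ℕ := (s.filter (sepp X)).card

lemma dcut_eq_crossN (G : MG V) (X : Finset V) : dcut G X = crossN X G.edges := rfl

lemma sepp_iff {X : Finset V} {u v : V} : sepp X s(u, v) ↔ ¬(u ∈ X ↔ v ∈ X) := by
  constructor
  · rintro ⟨a, b, hab, ha, hb⟩
    rw [Sym2.eq_iff] at hab
    rcases hab with ⟨rfl, rfl⟩ | ⟨rfl, rfl⟩ <;> tauto
  · intro h
    by_cases hu : u ∈ X
    · exact ⟨u, v, rfl, hu, fun hv => h ⟨fun _ => hv, fun _ => hu⟩⟩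
    · refine ⟨v, u, Sym2.eq_swap, ?_, hu⟩
      by_contra hv
      exact h ⟨fun h' => absurd h' hu, fun h' => absurd h' hv⟩

lemma crossN_add (X : Finset V) (s t : Multiset (Sym2 V)) :
    crossN X (s + t) = crossN X s + crossN X t := by
  simp [crossN, Multiset.filter_add]

lemma crossN_le (X : Finset V) {s t : Multiset (Sym2 V)} (h : s ≤ t) :
    crossN X s ≤ crossN X t :=
  Multiset.card_le_card (Multiset.filter_le_filter _ h)

lemma crossN_cons (X : Finset V) (e : Sym2 V) (s : Multiset (Sym2 V)) :
    crossN X (e ::ₘ s) = (if sepp X e then 1 else 0) + crossN X s := by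
  by_cases h : sepp X e
  · simp [crossN, Multiset.filter_cons_of_pos _ h, h, Nat.add_comm]
  · simp [crossN, Multiset.filter_cons_of_neg _ h, h]

lemma crossN_nsmul (X : Finset V) (n : ℕ) (s : Multiset (Sym2 V)) :
    crossN X (n • s) = n * crossN X s := by
  induction n with
  | zero => simp [crossN]
  | succ k ih => rw [succ_nsmul, crossN_add, ih]; ring

lemma crossN_replicate (X : Finset V) (n : ℕ) (e : Sym2 V) :
    crossN X (Multiset.replicate n e) = if sepp X e then n else 0 := by
  induction n with
  | zero => simp [crossN]
  | succ k ih =>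
    rw [Multiset.replicate_succ, crossN_cons, ih]
    split_ifs <;> omega

lemma crossN_msum (X : Finset V) (M : Multiset (Multiset (Sym2 V))) :
    crossN X M.sum = (M.map (crossN X)).sum := by
  induction M using Multiset.induction with
  | empty => simp [crossN]
  | cons a s ih => simp [Multiset.sum_cons, crossN_add, ih]

lemma crossN_finsum (X : Finset V) {ι : Type*} (s : Finset ι) (f : ι → Multiset (Sym2 V)) :
    crossN X (∑ i ∈ s, f i) = ∑ i ∈ s, crossN X (f i) := by
  classical
  induction s using Finset.cons_induction with
  | empty => simp [crossN]
  | cons a s ha ih =>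
    rw [Finset.sum_cons, Finset.sum_cons, crossN_add, ih]

/-! #### walkEdges basics -/

lemma walkEdges_nil : walkEdges ([] : List V) = 0 := rfl

lemma walkEdges_single (a : V) : walkEdges [a] = 0 := rfl

lemma walkEdges_cons₂ (a b : V) (t : List V) :
    walkEdges (a :: b :: t) = s(a, b) ::ₘ walkEdges (b :: t) := rfl

lemma mem_walkEdges {e : Sym2 V} {l : List V} :
    e ∈ walkEdges l ↔ ∃ p ∈ l.zip l.tail, s(p.1, p.2) = e := by
  simp [walkEdges]

lemma zip_tail_splice (P : List V) (x : V) (C : List V) :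
    (P ++ x :: C).zip (P ++ x :: C).tail =
      ((P ++ [x]).zip (P ++ [x]).tail) ++ ((x :: C).zip C) := by
  induction P with
  | nil => simp
  | cons p P ih =>
    cases P with
    | nil => simp
    | cons q P' =>
      have := ih
      simp only [List.cons_append, List.tail_cons, List.zip_cons_cons] at this ⊢
      rw [this]

lemma walkEdges_splice (P : List V) (x : V) (C : List V) :
    walkEdges (P ++ x :: C) = walkEdges (P ++ [x]) + walkEdges (x :: C) := by
  unfold walkEdges
  rw [zip_tail_splice, List.map_append]
  simp


lemma walkEdges_concat (l : List V) (h : l ≠ []) (x : V) :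
    walkEdges (l ++ [x]) = s(l.getLast h, x) ::ₘ walkEdges l := by
  induction l with
  | nil => exact absurd rfl h
  | cons a t ih =>
    cases t with
    | nil => simp [walkEdges]
    | cons b t' =>
      have h' : b :: t' ≠ [] := by simp
      have hbt : b :: t' ++ [x] = b :: (t' ++ [x]) := rfl
      rw [List.cons_append, hbt, walkEdges_cons₂, ← hbt, ih h', walkEdges_cons₂,
        List.getLast_cons h']
      exact (Multiset.cons_swap _ _ _)

lemma walkEdges_reverse (l : List V) : walkEdges l.reverse = walkEdges l := by
  induction l with
  | nil => rfl
  | cons a t ih =>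
    cases t with
    | nil => rfl
    | cons b t' =>
      have h' : (b :: t').reverse ≠ [] := by simp
      rw [List.reverse_cons, walkEdges_concat _ h', ih, walkEdges_cons₂]
      congr 1
      have : (b :: t').reverse.getLast h' = (b :: t').head (by simp) := by
        rw [List.getLast_reverse]
      rw [this]
      simp [Sym2.eq_swap]

lemma of_mem_zip_tail {l : List V} {p : V × V} (h : p ∈ l.zip l.tail) :
    p.1 ∈ l ∧ p.2 ∈ l := by
  have h1 := List.of_mem_zip h
  exact ⟨h1.1, List.mem_of_mem_tail h1.2⟩

lemma nodup_walkEdges {l : List V} (h : l.Nodup) : (walkEdges l).Nodup := by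
  induction l with
  | nil => simp [walkEdges]
  | cons a t ih =>
    cases t with
    | nil => simp [walkEdges]
    | cons b t' =>
      rw [walkEdges_cons₂]
      refine Multiset.nodup_cons.2 ⟨?_, ih h.of_cons⟩
      intro hmem
      rw [mem_walkEdges] at hmem
      obtain ⟨p, hp, hpe⟩ := hmem
      have hmem2 := of_mem_zip_tail hp
      have ha : a ∉ b :: t' := (List.nodup_cons.1 h).1
      rw [Sym2.eq_iff] at hpe
      rcases hpe with ⟨h1, h2⟩ | ⟨h1, h2⟩
      · exact ha (h1 ▸ hmem2.1)
      · exact ha (h2 ▸ hmem2.2)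

lemma dup_split {l : List V} (h : ¬ l.Nodup) :
    ∃ (A : List V) (x : V) (B C : List V), l = A ++ x :: (B ++ x :: C) := by
  induction l with
  | nil => exact absurd List.nodup_nil h
  | cons a t ih =>
    by_cases ha : a ∈ t
    · obtain ⟨B, C, rfl⟩ := List.append_of_mem ha
      exact ⟨[], a, B, C, rfl⟩
    · have : ¬ t.Nodup := fun hn => h (List.nodup_cons.2 ⟨ha, hn⟩)
      obtain ⟨A, x, B, C, rfl⟩ := ih this
      exact ⟨a :: A, x, B, C, rfl⟩

lemma exists_path_aux : ∀ (n : ℕ) (l : List V), l.length ≤ n → l ≠ [] →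
    ∃ l' : List V, l' ≠ [] ∧ l'.Nodup ∧ l'.head? = l.head? ∧ l'.getLast? = l.getLast? ∧
      (∀ v ∈ l', v ∈ l) ∧ walkEdges l' ≤ walkEdges l := by
  intro n
  induction n with
  | zero =>
    intro l hlen hne
    cases l with
    | nil => exact absurd rfl hne
    | cons a t => simp at hlen
  | succ n ih =>
    intro l hlen hne
    by_cases hnd : l.Nodup
    · exact ⟨l, hne, hnd, rfl, rfl, fun v h => h, le_refl _⟩
    · obtain ⟨A, x, B, C, rfl⟩ := dup_split hnd
      have hlen' : (A ++ x :: C).length ≤ n := by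
        simp only [List.length_append, List.length_cons] at hlen ⊢
        omega
      have hne' : A ++ x :: C ≠ [] := by simp
      obtain ⟨l'', h1, h2, h3, h4, h5, h6⟩ := ih (A ++ x :: C) hlen' hne'
      refine ⟨l'', h1, h2, ?_, ?_, ?_, ?_⟩
      · rw [h3]
        cases A with
        | nil => rfl
        | cons a A' =>
          rw [List.head?_append_of_ne_nil _ (by simp), List.head?_append_of_ne_nil _ (by simp)]
      · rw [h4, List.getLast?_append_cons A x C, List.getLast?_append_cons A x (B ++ x :: C),
          show x :: (B ++ x :: C) = (x :: B) ++ x :: C from rfl, List.getLast?_append_cons]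
      · intro v hv
        have := h5 v hv
        simp only [List.mem_append, List.mem_cons] at this ⊢
        tauto
      · refine le_trans h6 ?_
        have hsub : List.Sublist ((A ++ x :: C).zip (A ++ x :: C).tail)
            ((A ++ x :: (B ++ x :: C)).zip (A ++ x :: (B ++ x :: C)).tail) := by
          have e1 := zip_tail_splice A x C
          have e2 := zip_tail_splice A x (B ++ x :: C)
          have e3 := zip_tail_splice (x :: B) x C
          simp only [List.cons_append, List.tail_cons] at e3
          rw [e1, e2, e3]
          exact (List.Sublist.refl _).append (List.sublist_append_right _ _)
        exact Multiset.coe_le.2 (hsub.map (fun p => s(p.1, p.2))).subperm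

lemma exists_path (l : List V) (hne : l ≠ []) :
    ∃ l' : List V, l' ≠ [] ∧ l'.Nodup ∧ l'.head? = l.head? ∧ l'.getLast? = l.getLast? ∧
      (∀ v ∈ l', v ∈ l) ∧ walkEdges l' ≤ walkEdges l :=
  exists_path_aux l.length l (le_refl _) hne

/-- Tracing a walk through a "closed" set of vertices. -/
lemma walk_trace {P : V → Prop} :
    ∀ (l : List V) (h : V), l.head? = some h → P h →
      (∀ a b, (a, b) ∈ l.zip l.tail → P a → P b) → ∀ w ∈ l, P w := by
  intro l
  induction l with
  | nil => intro h hh; simp at hh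
  | cons a t ih =>
    intro h hh hPh hstep w hw
    rw [List.head?_cons, Option.some_inj] at hh
    subst hh
    rcases List.mem_cons.1 hw with rfl | hw'
    · exact hPh
    · cases t with
      | nil => simp at hw'
      | cons b t' =>
        have hb : P b := hstep a b (by simp) hPh
        refine ih b rfl hb ?_ w hw'
        intro c d hcd hc
        simp only [List.tail_cons] at hcd
        refine hstep c d ?_ hc
        simp only [List.tail_cons, List.zip_cons_cons]
        exact List.mem_cons_of_mem _ hcd


lemma crossN_we_cons₂ (X : Finset V) (a b : V) (t : List V) :
    crossN X (walkEdges (a :: b :: t)) =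
      (if sepp X s(a, b) then 1 else 0) + crossN X (walkEdges (b :: t)) := by
  rw [walkEdges_cons₂, crossN_cons]

lemma crossN_walk_parity (X : Finset V) :
    ∀ (l : List V) (u v : V), l.head? = some u → l.getLast? = some v →
      crossN X (walkEdges l) % 2 = if (u ∈ X ↔ v ∈ X) then 0 else 1 := by
  intro l
  induction l with
  | nil => intro u v hu hv; simp at hu
  | cons a t ih =>
    intro u v hu hv
    rw [List.head?_cons, Option.some_inj] at hu
    subst hu
    cases t with
    | nil =>
      simp only [List.getLast?_singleton, Option.some_inj] at hv
      subst hv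
      simp [walkEdges_single, crossN]
    | cons b t' =>
      rw [List.getLast?_cons_cons] at hv
      have hrec := ih b v rfl hv
      rw [crossN_we_cons₂]
      by_cases ha : a ∈ X <;> by_cases hb : b ∈ X <;> by_cases hvv : v ∈ X <;>
        simp [sepp_iff, ha, hb, hvv] at hrec ⊢ <;> omega

lemma crossN_walk_pos (X : Finset V) {l : List V} {u v : V}
    (hu : l.head? = some u) (hv : l.getLast? = some v) (h : ¬(u ∈ X ↔ v ∈ X)) :
    1 ≤ crossN X (walkEdges l) := by
  have := crossN_walk_parity X l u v hu hv
  rw [if_neg h] at this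
  omega

lemma crossN_walk_even (X : Finset V) {l : List V} {u v : V}
    (hu : l.head? = some u) (hv : l.getLast? = some v) (h : u ∈ X ↔ v ∈ X) :
    crossN X (walkEdges l) % 2 = 0 := by
  have := crossN_walk_parity X l u v hu hv
  rw [if_pos h] at this
  exact this

lemma crossN_walk_zero_out (X : Finset V) :
    ∀ (l : List V), (∀ a ∈ l, a ∉ X) → crossN X (walkEdges l) = 0 := by
  intro l
  induction l with
  | nil => intro _; simp [walkEdges_nil, crossN]
  | cons a t ih =>
    intro h
    cases t with
    | nil => simp [walkEdges_single, crossN]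
    | cons b t' =>
      rw [crossN_we_cons₂, if_neg, ih (fun x hx => h x (List.mem_cons_of_mem _ hx))]
      rw [sepp_iff]
      have := h a (by simp); have := h b (by simp)
      tauto

lemma crossN_walk_zero_in (X : Finset V) :
    ∀ (l : List V), (∀ a ∈ l, a ∈ X) → crossN X (walkEdges l) = 0 := by
  intro l
  induction l with
  | nil => intro _; simp [walkEdges_nil, crossN]
  | cons a t ih =>
    intro h
    cases t with
    | nil => simp [walkEdges_single, crossN]
    | cons b t' =>
      rw [crossN_we_cons₂, if_neg, ih (fun x hx => h x (List.mem_cons_of_mem _ hx))]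
      rw [sepp_iff]
      have := h a (by simp); have := h b (by simp)
      tauto

lemma crossN_walk_in_out (X : Finset V) :
    ∀ (A : List V), A ≠ [] → ∀ (B : List V), B ≠ [] → (∀ a ∈ A, a ∈ X) → (∀ b ∈ B, b ∉ X) →
      crossN X (walkEdges (A ++ B)) = 1 := by
  intro A
  induction A with
  | nil => intro h; exact absurd rfl h
  | cons a A' ih =>
    intro _ B hB hin hout
    cases A' with
    | nil =>
      cases B with
      | nil => exact absurd rfl hB
      | cons b B' =>
        rw [List.singleton_append, crossN_we_cons₂, if_pos, crossN_walk_zero_out X _ hout]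
        rw [sepp_iff]
        have := hin a (by simp); have := hout b (by simp)
        tauto
    | cons a2 A'' =>
      have : (a :: a2 :: A'') ++ B = a :: a2 :: (A'' ++ B) := rfl
      rw [this, crossN_we_cons₂, if_neg, ← List.cons_append,
        ih (by simp) B hB (fun x hx => hin x (List.mem_cons_of_mem _ hx)) hout]
      rw [sepp_iff]
      have := hin a (by simp); have := hin a2 (by simp)
      tauto

lemma crossN_walk_out_in (X : Finset V) :
    ∀ (A : List V), A ≠ [] → ∀ (B : List V), B ≠ [] → (∀ a ∈ A, a ∉ X) → (∀ b ∈ B, b ∈ X) →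
      crossN X (walkEdges (A ++ B)) = 1 := by
  intro A
  induction A with
  | nil => intro h; exact absurd rfl h
  | cons a A' ih =>
    intro _ B hB hout hin
    cases A' with
    | nil =>
      cases B with
      | nil => exact absurd rfl hB
      | cons b B' =>
        rw [List.singleton_append, crossN_we_cons₂, if_pos, crossN_walk_zero_in X _ hin]
        rw [sepp_iff]
        have := hout a (by simp); have := hin b (by simp)
        tauto
    | cons a2 A'' =>
      have : (a :: a2 :: A'') ++ B = a :: a2 :: (A'' ++ B) := rfl
      rw [this, crossN_we_cons₂, if_neg, ← List.cons_append,
        ih (by simp) B hB (fun x hx => hout x (List.mem_cons_of_mem _ hx)) hin]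
      rw [sepp_iff]
      have := hout a (by simp); have := hout a2 (by simp)
      tauto

lemma crossN_walk_mid (X : Finset V) {A B : List V} {x : V} (hA : A ≠ []) (hB : B ≠ [])
    (houtA : ∀ a ∈ A, a ∉ X) (hx : x ∈ X) (houtB : ∀ b ∈ B, b ∉ X) :
    crossN X (walkEdges (A ++ x :: B)) = 2 := by
  rw [walkEdges_splice, crossN_add,
    crossN_walk_out_in X A hA [x] (by simp) houtA (by simpa using hx),
    show (x :: B) = [x] ++ B from rfl,
    crossN_walk_in_out X [x] (by simp) B hB (by simpa using hx) houtB]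

lemma pair_head {a : V} {t : List V} (hnd : (a :: t).Nodup) {p : V × V}
    (hp : p ∈ (a :: t).zip (a :: t).tail) (hpa : p.1 = a ∨ p.2 = a) :
    ∃ (b : V) (t' : List V), t = b :: t' ∧ p = (a, b) := by
  cases t with
  | nil => simp at hp
  | cons b t' =>
    simp only [List.tail_cons, List.zip_cons_cons] at hp
    rcases List.mem_cons.1 hp with rfl | hp'
    · exact ⟨b, t', rfl, rfl⟩
    · exfalso
      have hmem := of_mem_zip_tail hp'
      have ha : a ∉ b :: t' := (List.nodup_cons.1 hnd).1
      rcases hpa with h | h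
      · exact ha (h ▸ hmem.1)
      · exact ha (h ▸ hmem.2)

lemma crossN_eq_zero_iff {X : Finset V} {s : Multiset (Sym2 V)} :
    crossN X s = 0 ↔ ∀ e ∈ s, ¬ sepp X e := by
  rw [crossN, Multiset.card_eq_zero, Multiset.filter_eq_nil]

lemma one_le_crossN_of_mem {X : Finset V} {s : Multiset (Sym2 V)} {e : Sym2 V}
    (he : e ∈ s) (hs : sepp X e) : 1 ≤ crossN X s := by
  rw [crossN, Nat.one_le_iff_ne_zero, ← Nat.pos_iff_ne_zero, Multiset.card_pos_iff_exists_mem]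
  exact ⟨e, Multiset.mem_filter.2 ⟨he, hs⟩⟩

lemma exists_sepp_of_crossN_pos {X : Finset V} {s : Multiset (Sym2 V)}
    (h : 1 ≤ crossN X s) : ∃ e ∈ s, sepp X e := by
  rw [crossN, Nat.one_le_iff_ne_zero, ← Nat.pos_iff_ne_zero, Multiset.card_pos_iff_exists_mem] at h
  obtain ⟨e, he⟩ := h
  exact ⟨e, (Multiset.mem_filter.1 he).1, (Multiset.mem_filter.1 he).2⟩


lemma card_filter_replicate {α : Type*} (p : α → Prop) [DecidablePred p] (n : ℕ) (a : α) :
    ((Multiset.replicate n a).filter p).card = if p a then n else 0 := by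
  induction n with
  | zero => simp
  | succ k ih =>
    rw [Multiset.replicate_succ, Multiset.filter_cons, Multiset.card_add]
    by_cases h : p a <;>
      simp only [h, if_pos, if_neg, not_false_iff, Multiset.card_singleton,
        Multiset.card_zero] at ih ⊢ <;> omega

/-- Whether the walk corresponding to the `D_m`-edge `e` must cross the cut `X`. -/
def sepE (φ : Fin 4 → V) (X : Finset V) (e : Sym2 (Fin 4)) : Prop := sepp X (Sym2.map φ e)

lemma sepE_mk {φ : Fin 4 → V} {X : Finset V} {u v : Fin 4} :
    sepE φ X s(u, v) ↔ ¬(φ u ∈ X ↔ φ v ∈ X) := by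
  rw [sepE, Sym2.map_pair_eq, sepp_iff]

section Imm

variable {φ : Fin 4 → V}

/-- A walk datum is valid for `φ`. -/
def WOK (φ : Fin 4 → V) (p : Sym2 (Fin 4) × List V) : Prop :=
  ∃ u v, p.1 = s(u, v) ∧ IsWalk p.2 (φ u) (φ v)

lemma per_walk_parity {p : Sym2 (Fin 4) × List V} (hp : WOK φ p) (X : Finset V) :
    crossN X (walkEdges p.2) % 2 = if sepE φ X p.1 then 1 else 0 := by
  obtain ⟨u, v, he, hw⟩ := hp
  rw [he, sepE_mk]
  have h := crossN_walk_parity X p.2 (φ u) (φ v) hw.1 hw.2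
  by_cases hiff : (φ u ∈ X ↔ φ v ∈ X) <;> simp [hiff] at h ⊢ <;> exact h

lemma per_walk_one {p : Sym2 (Fin 4) × List V} (hp : WOK φ p) {X : Finset V}
    (hs : sepE φ X p.1) : 1 ≤ crossN X (walkEdges p.2) := by
  have := per_walk_parity hp X
  rw [if_pos hs] at this
  omega

lemma key1 (X : Finset V) :
    ∀ (Q : Multiset (Sym2 (Fin 4) × List V)), (∀ p ∈ Q, WOK φ p) →
      (Q.filter (fun p => sepE φ X p.1)).card ≤
        (Q.map fun p => crossN X (walkEdges p.2)).sum := by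
  intro Q
  induction Q using Multiset.induction with
  | empty => simp
  | cons a s ih =>
    intro hOK
    have ha := hOK a (Multiset.mem_cons_self a s)
    have hs := ih (fun p hp => hOK p (Multiset.mem_cons_of_mem hp))
    rw [Multiset.filter_cons, Multiset.card_add, Multiset.map_cons, Multiset.sum_cons]
    by_cases h : sepE φ X a.1
    · have := per_walk_one ha h
      simp only [h, if_pos] at *
      simp only [Multiset.card_singleton]
      omega
    · rw [if_neg h, Multiset.card_zero, zero_add]
      exact le_trans hs (Nat.le_add_left _ _)

lemma tot {G : MG V} {P : Multiset (Sym2 (Fin 4) × List V)}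
    (hPsum : (P.map fun p => walkEdges p.2).sum ≤ G.edges) (X : Finset V) :
    (P.map fun p => crossN X (walkEdges p.2)).sum ≤ dcut G X := by
  rw [dcut_eq_crossN]
  have h1 : (P.map fun p => crossN X (walkEdges p.2)).sum
      = crossN X ((P.map fun p => walkEdges p.2).sum) := by
    rw [crossN_msum, Multiset.map_map]
    rfl
  rw [h1]
  exact crossN_le X hPsum

/-- The forcing lemma: if the number of separated demand edges is at least `d(X) - 1`,
then every walk crosses `X` exactly once or not at all, according to separation. -/
lemma force {G : MG V} {P : Multiset (Sym2 (Fin 4) × List V)}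
    (hOK : ∀ p ∈ P, WOK φ p)
    (hPsum : (P.map fun p => walkEdges p.2).sum ≤ G.edges) (X : Finset V)
    (hd : dcut G X ≤ (P.filter (fun p => sepE φ X p.1)).card + 1)
    {p₀ : Sym2 (Fin 4) × List V} (hp₀ : p₀ ∈ P) :
    crossN X (walkEdges p₀.2) = if sepE φ X p₀.1 then 1 else 0 := by
  have hPQ : P = p₀ ::ₘ P.erase p₀ := (Multiset.cons_erase hp₀).symm
  set Q := P.erase p₀ with hQdef
  have htot := tot hPsum X
  rw [hPQ, Multiset.map_cons, Multiset.sum_cons] at htot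
  have hQOK : ∀ p ∈ Q, WOK φ p := fun p hp => hOK p (by rw [hPQ]; exact Multiset.mem_cons_of_mem hp)
  have hQ := key1 X Q hQOK
  have hcard : (P.filter (fun p => sepE φ X p.1)).card
      = (if sepE φ X p₀.1 then 1 else 0) + (Q.filter (fun p => sepE φ X p.1)).card := by
    rw [hPQ, Multiset.filter_cons, Multiset.card_add]
    by_cases h : sepE φ X p₀.1 <;> simp [h]
  have hpar := per_walk_parity (hOK p₀ hp₀) X
  rw [hcard] at hd
  by_cases h : sepE φ X p₀.1 <;> simp only [h, if_pos, if_neg, not_false_iff] at hpar hd ⊢ <;>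
    omega

lemma scard {m : ℕ} (X : Finset V) :
    ((dmEdges m).filter (fun e => sepE φ X e)).card =
      (if sepE φ X s((0 : Fin 4), (1 : Fin 4)) then m - 2 else 0)
      + ((if sepE φ X s((0 : Fin 4), (2 : Fin 4)) then 1 else 0)
      + ((if sepE φ X s((0 : Fin 4), (3 : Fin 4)) then 1 else 0)
      + ((if sepE φ X s((1 : Fin 4), (2 : Fin 4)) then 1 else 0)
      + ((if sepE φ X s((1 : Fin 4), (3 : Fin 4)) then 1 else 0)
      + (if sepE φ X s((2 : Fin 4), (3 : Fin 4)) then 1 else 0))))) := by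
  rw [dmEdges, Multiset.filter_add, Multiset.card_add]
  congr 1
  · exact card_filter_replicate _ _ _
  · rw [show ({s((0:Fin 4),(2:Fin 4)), s((0:Fin 4),(3:Fin 4)), s((1:Fin 4),(2:Fin 4)),
        s((1:Fin 4),(3:Fin 4)), s((2:Fin 4),(3:Fin 4))} : Multiset (Sym2 (Fin 4)))
        = s((0:Fin 4),(2:Fin 4)) ::ₘ (s((0:Fin 4),(3:Fin 4)) ::ₘ (s((1:Fin 4),(2:Fin 4)) ::ₘ
          (s((1:Fin 4),(3:Fin 4)) ::ₘ {s((2:Fin 4),(3:Fin 4))}))) from rfl]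
    repeat rw [Multiset.filter_cons, Multiset.card_add]
    rw [Multiset.filter_singleton]
    congr 1 <;> [skip; congr 1] <;> [skip; skip; congr 1] <;> [skip; skip; skip; congr 1] <;>
      (try split_ifs <;> simp)


lemma filter_card_transfer {m : ℕ} {P : Multiset (Sym2 (Fin 4) × List V)}
    (hPfst : P.map Prod.fst = dmEdges m) (q : Sym2 (Fin 4) → Prop) :
    (P.filter (fun p => q p.1)).card = ((dmEdges m).filter q).card := by
  rw [← hPfst, ← Multiset.countP_eq_card_filter, ← Multiset.countP_eq_card_filter,
    Multiset.countP_map, Multiset.countP_eq_card_filter]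

lemma typeA_false {G : MG V} {x0 x1 : V} {m : ℕ} (hm : 2 ≤ m)
    (hφ0 : φ 0 = x0) (hφ1 : φ 1 = x1) (hinj : Function.Injective φ)
    (hrange : ∀ w, φ w ∈ G.verts)
    {P : Multiset (Sym2 (Fin 4) × List V)} (hPfst : P.map Prod.fst = dmEdges m)
    (hOK : ∀ p ∈ P, WOK φ p)
    (hPsum : (P.map fun p => walkEdges p.2).sum ≤ G.edges)
    (hTA : TypeA G m x0 x1) : False := by
  obtain ⟨X0, X1, hx00, hx11, hcard0, hcard1, n, Cs, ⟨hsub, hstep, hdc⟩, hC0, hClast⟩ := hTA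
  have dne : ∀ i j : Fin 4, i ≠ j → φ i ≠ φ j := fun i j hij h => hij (hinj h)
  have d02 : φ 0 ≠ φ 2 := dne 0 2 (by decide)
  have d03 : φ 0 ≠ φ 3 := dne 0 3 (by decide)
  have d12 : φ 1 ≠ φ 2 := dne 1 2 (by decide)
  have d13 : φ 1 ≠ φ 3 := dne 1 3 (by decide)
  have d23 : φ 2 ≠ φ 3 := dne 2 3 (by decide)
  have hx0C : ∀ i, x0 ∈ Cs i := by
    intro i
    induction i using Fin.induction with
    | zero => rw [hC0]; exact hx00
    | succ i ih => exact (hstep i).1 ih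
  have hsubLast : ∀ i, Cs i ⊆ Cs (Fin.last n) := by
    intro i
    induction i using Fin.reverseInduction with
    | last => exact fun _ h => h
    | cast i ih => exact fun x hx => ih ((hstep i).1 hx)
  have hx1C : ∀ i, x1 ∉ Cs i := by
    intro i hmem
    have h1 : x1 ∈ Cs (Fin.last n) := hsubLast i hmem
    have h2 : x1 ∈ G.verts \ Cs (Fin.last n) := by rw [hClast]; exact hx11
    exact (Finset.mem_sdiff.1 h2).2 h1
  have hiff : ∀ i, (φ 2 ∈ Cs i ↔ φ 3 ∈ Cs i) := by
    intro i
    by_contra hmix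
    have h0 : φ 0 ∈ Cs i := hφ0 ▸ hx0C i
    have h1 : φ 1 ∉ Cs i := hφ1 ▸ hx1C i
    have hS : ((dmEdges m).filter (fun e => sepE φ (Cs i) e)).card = m + 1 := by
      rw [scard]
      by_cases h2 : φ 2 ∈ Cs i
      · have h3 : φ 3 ∉ Cs i := fun h => hmix ⟨fun _ => h, fun _ => h2⟩
        simp only [sepE_mk, h0, h1, h2, h3]
        simp only [iff_true, iff_false, not_true, not_false_iff, not_not,
          if_true, if_false, if_pos, if_neg]
        simp
        omega
      · have h3 : φ 3 ∈ Cs i := by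
          by_contra h3
          exact hmix ⟨fun h => absurd h h2, fun h => absurd h h3⟩
        simp only [sepE_mk, h0, h1, h2, h3]
        simp
        omega
    have hle := key1 (Cs i) P hOK
    have htot := tot hPsum (Cs i)
    have hcount := filter_card_transfer hPfst (fun e => sepE φ (Cs i) e)
    rw [hdc i] at htot
    omega
  have h2start : φ 2 ∉ Cs 0 := by
    intro h2
    have h3 := (hiff 0).1 h2
    have hsub3 : ({φ 0, φ 2, φ 3} : Finset V) ⊆ X0 := by
      rw [← hC0]
      intro x hx
      simp only [Finset.mem_insert, Finset.mem_singleton] at hx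
      rcases hx with rfl | rfl | rfl
      · exact hφ0 ▸ hx0C 0
      · exact h2
      · exact h3
    have hc3 : ({φ 0, φ 2, φ 3} : Finset V).card = 3 := by
      rw [Finset.card_insert_of_notMem (by simp [d02, d03]),
        Finset.card_insert_of_notMem (by simp [d23]), Finset.card_singleton]
    have := Finset.card_le_card hsub3
    omega
  have h2last : φ 2 ∈ Cs (Fin.last n) := by
    by_contra h2
    have h3 : φ 3 ∉ Cs (Fin.last n) := fun hmem => h2 ((hiff _).2 hmem)
    have hsub3 : ({φ 1, φ 2, φ 3} : Finset V) ⊆ X1 := by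
      rw [← hClast]
      intro x hx
      simp only [Finset.mem_insert, Finset.mem_singleton] at hx
      rcases hx with rfl | rfl | rfl
      · exact Finset.mem_sdiff.2 ⟨hrange 1, hφ1 ▸ hx1C _⟩
      · exact Finset.mem_sdiff.2 ⟨hrange 2, h2⟩
      · exact Finset.mem_sdiff.2 ⟨hrange 3, h3⟩
    have hc3 : ({φ 1, φ 2, φ 3} : Finset V).card = 3 := by
      rw [Finset.card_insert_of_notMem (by simp [d12, d13]),
        Finset.card_insert_of_notMem (by simp [d23]), Finset.card_singleton]
    have := Finset.card_le_card hsub3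
    omega
  have hex : ∃ b : ℕ, ∃ h : b < n + 1, φ 2 ∈ Cs ⟨b, h⟩ :=
    ⟨n, n.lt_succ_self, by exact h2last⟩
  classical
  set b := Nat.find hex with hbdef
  obtain ⟨hbn, hb2⟩ := Nat.find_spec hex
  have hbpos : 0 < b := by
    by_contra hcon
    have h0 : b = 0 := by omega
    apply h2start
    have h2' := hb2
    have hfe : (⟨Nat.find hex, hbn⟩ : Fin (n + 1)) = 0 :=
      Fin.ext (by simp only [Fin.val_zero]; omega)
    rwa [hfe] at h2'
  have hbn' : b < n + 1 := hbdef ▸ hbn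
  have hb1n : b - 1 < n + 1 := by omega
  have hmin := Nat.find_min hex (show b - 1 < Nat.find hex by omega)
  have h2notb1 : φ 2 ∉ Cs ⟨b - 1, hb1n⟩ := fun h => hmin ⟨hb1n, h⟩
  have hblt : b - 1 < n := by omega
  set i : Fin n := ⟨b - 1, hblt⟩ with hidef
  have hcastb : i.castSucc = ⟨b - 1, hb1n⟩ := rfl
  have hsuccb : i.succ = ⟨b, hbn'⟩ := by
    apply Fin.ext
    simp [hidef, Fin.val_succ]
    omega
  obtain ⟨hsubi, hone⟩ := hstep i
  have hb2' : φ 2 ∈ Cs ⟨b, hbn'⟩ := hb2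
  have h3b : φ 3 ∈ Cs ⟨b, hbn'⟩ := (hiff _).1 hb2'
  have h3notb1 : φ 3 ∉ Cs ⟨b - 1, hb1n⟩ := fun h => h2notb1 ((hiff _).2 h)
  have hpair : ({φ 2, φ 3} : Finset V) ⊆ Cs i.succ \ Cs i.castSucc := by
    intro x hx
    simp only [Finset.mem_insert, Finset.mem_singleton] at hx
    rcases hx with rfl | rfl
    · refine Finset.mem_sdiff.2 ⟨?_, ?_⟩
      · rw [hsuccb]; exact hb2'
      · rw [hcastb]; exact h2notb1
    · refine Finset.mem_sdiff.2 ⟨?_, ?_⟩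
      · rw [hsuccb]; exact h3b
      · rw [hcastb]; exact h3notb1
  have h2card : ({φ 2, φ 3} : Finset V).card = 2 := by
    rw [Finset.card_insert_of_notMem (by simp [d23]), Finset.card_singleton]
  have hle2 := Finset.card_le_card hpair
  omega

end Imm


lemma mem_le_sum {α : Type*} {s : Multiset (Multiset α)} {a : Multiset α} (h : a ∈ s) :
    a ≤ s.sum := by
  rw [← Multiset.cons_erase h, Multiset.sum_cons]
  exact le_self_add

lemma isWalk_reverse {l : List V} {u v : V} (h : IsWalk l u v) : IsWalk l.reverse v u := by
  obtain ⟨h1, h2⟩ := h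
  refine ⟨?_, ?_⟩
  · rw [List.head?_reverse]; exact h2
  · rw [← List.head?_reverse, List.reverse_reverse]; exact h1

lemma mem_walkEdges_of_pair {l : List V} {p : V × V} (hp : p ∈ l.zip l.tail) :
    s(p.1, p.2) ∈ walkEdges l := mem_walkEdges.2 ⟨p, hp, rfl⟩

/-! ### Components -/

/-- Reachability in a multigraph. -/
def Reach (H : MG V) : V → V → Prop := Relation.ReflTransGen (fun a b => s(a, b) ∈ H.edges)

lemma reach_walk {H : MG V} {u v : V} (hu : u ∈ H.verts) (h : Reach H u v) :
    ∃ L : List V, L ≠ [] ∧ IsWalk L u v ∧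
      (∀ p ∈ L.zip L.tail, s(p.1, p.2) ∈ H.edges) ∧
      (∀ z ∈ L, z ∈ H.verts ∧ Reach H u z) := by
  induction h with
  | refl =>
    exact ⟨[u], by simp, ⟨rfl, rfl⟩, by simp, by
      intro z hz; simp at hz; subst hz; exact ⟨hu, Relation.ReflTransGen.refl⟩⟩
  | @tail b c hab hbc ih =>
    obtain ⟨L, hne, ⟨hhead, hlast⟩, hpairs, hmem⟩ := ih
    have hgl : L.getLast hne = b := by
      rw [List.getLast?_eq_getLast_of_ne_nil hne] at hlast
      exact Option.some_inj.1 hlast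
    refine ⟨L ++ [c], by simp, ⟨?_, ?_⟩, ?_, ?_⟩
    · rw [List.head?_append_of_ne_nil _ hne]; exact hhead
    · rw [List.getLast?_concat]
    · intro p hp
      have hdL : L.dropLast ++ [b] = L := by rw [← hgl]; exact List.dropLast_append_getLast hne
      have hsp : (L ++ [c]).zip (L ++ [c]).tail
          = (L.zip L.tail) ++ [(b, c)] := by
        conv_lhs => rw [← hdL]
        rw [List.append_assoc, List.singleton_append, zip_tail_splice L.dropLast b [c], hdL]
        simp
      rw [hsp] at hp
      rcases List.mem_append.1 hp with h' | h'
      · exact hpairs p h'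
      · simp at h'
        subst h'
        exact hbc
    · intro z hz
      rcases List.mem_append.1 hz with h' | h'
      · exact hmem z h'
      · simp at h'
        subst h'
        exact ⟨H.edge_support _ hbc _ (Sym2.mem_mk_right _ _), hab.tail hbc⟩

/-- The component of `v` in `H`. -/
def component (H : MG V) (v : V) : Finset V := H.verts.filter (fun u => Reach H v u)

lemma mem_component_self {H : MG V} {v : V} (hv : v ∈ H.verts) : v ∈ component H v :=
  Finset.mem_filter.2 ⟨hv, Relation.ReflTransGen.refl⟩

lemma isComponent_component {H : MG V} {v : V} (hv : v ∈ H.verts) :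
    IsComponent H (component H v) := by
  refine ⟨Finset.filter_subset _ _, ⟨v, mem_component_self hv⟩, ?_, ?_⟩
  · -- connectivity of the induced subgraph
    intro p hp q hq
    have hp' : p ∈ H.verts ∩ component H v := hp
    have hq' : q ∈ H.verts ∩ component H v := hq
    simp only [Finset.mem_inter] at hp' hq'
    have hrp : Reach H v p := (Finset.mem_filter.1 hp'.2).2
    have hrq : Reach H v q := (Finset.mem_filter.1 hq'.2).2
    obtain ⟨L1, hne1, hw1, hp1, hm1⟩ := reach_walk hv hrp
    obtain ⟨L2, hne2, hw2, hp2, hm2⟩ := reach_walk hv hrq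
    have hne1r : L1.reverse ≠ [] := by simpa using hne1
    have hglq : L1.reverse.getLast? = some v := by
      rw [List.getLast?_eq_head?_reverse, List.reverse_reverse]
      exact hw1.1
    have hgl : L1.reverse.getLast hne1r = v := by
      rw [List.getLast?_eq_getLast_of_ne_nil hne1r] at hglq
      exact Option.some_inj.1 hglq
    set J := L1.reverse ++ L2.tail with hJdef
    have hJne : J ≠ [] := by simp [hJdef, hne1r]
    have hL2cons : L2 = v :: L2.tail := by
      cases L2 with
      | nil => exact absurd rfl hne2
      | cons a t =>
        have := hw2.1
        rw [List.head?_cons, Option.some_inj] at this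
        rw [this]
        rfl
    have hdr : L1.reverse.dropLast ++ [v] = L1.reverse := by
      rw [← hgl]; exact List.dropLast_append_getLast hne1r
    have hJhead : J.head? = some p := by
      rw [hJdef, List.head?_append_of_ne_nil _ hne1r, List.head?_reverse]
      exact hw1.2
    have hJlast : J.getLast? = some q := by
      rw [hJdef, ← hdr, List.append_assoc, List.singleton_append, ← hL2cons,
        List.getLast?_append_of_ne_nil _ hne2]
      exact hw2.2
    have hJsplit : J.zip J.tail = (L1.reverse.zip L1.reverse.tail) ++ (L2.zip L2.tail) := by
      conv_lhs => rw [hJdef, ← hdr, List.append_assoc, List.singleton_append]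
      rw [zip_tail_splice _ v L2.tail, hdr]
      congr 1
      conv_rhs => rw [hL2cons]
      rfl
    have hJedge : ∀ pr ∈ J.zip J.tail, s(pr.1, pr.2) ∈ H.edges := by
      intro pr hpr
      rw [hJsplit] at hpr
      rcases List.mem_append.1 hpr with h' | h'
      · have hm : s(pr.1, pr.2) ∈ walkEdges L1.reverse := mem_walkEdges_of_pair h'
        rw [walkEdges_reverse] at hm
        obtain ⟨pr', hpr', hpre'⟩ := mem_walkEdges.1 hm
        rw [← hpre']
        exact hp1 pr' hpr'
      · exact hp2 pr h'
    have hJmem : ∀ z ∈ J, z ∈ H.verts ∧ Reach H v z := by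
      intro z hz
      rcases List.mem_append.1 hz with h' | h'
      · exact hm1 z (List.mem_reverse.1 h')
      · exact hm2 z (List.mem_of_mem_tail h')
    obtain ⟨l', hne', hnd', hh', hl', hsubm, hle'⟩ := exists_path J hJne
    refine ⟨l', ⟨by rw [hh', hJhead], by rw [hl', hJlast]⟩, ?_, ?_⟩
    · have hnd'' := nodup_walkEdges hnd'
      rw [Multiset.le_iff_count]
      intro e
      by_cases he : e ∈ walkEdges l'
      · have h1 : Multiset.count e (walkEdges l') ≤ 1 :=
          Multiset.nodup_iff_count_le_one.1 hnd'' e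
        have heJ : e ∈ walkEdges J := Multiset.mem_of_le hle' he
        obtain ⟨pr, hpr, hpre⟩ := mem_walkEdges.1 heJ
        have hedge := hJedge pr hpr
        have hmm := of_mem_zip_tail hpr
        have hin : e ∈ (induce H (component H v)).edges := by
          show e ∈ H.edges.filter _
          refine Multiset.mem_filter.2 ⟨hpre ▸ hedge, ?_⟩
          intro w hw
          rw [← hpre, Sym2.mem_iff] at hw
          rcases hw with rfl | rfl
          · have := hJmem pr.1 hmm.1
            exact Finset.mem_filter.2 ⟨this.1, this.2⟩
          · have := hJmem pr.2 hmm.2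
            exact Finset.mem_filter.2 ⟨this.1, this.2⟩
        exact le_trans h1 (Multiset.one_le_count_iff_mem.2 hin)
      · rw [Multiset.count_eq_zero_of_notMem he]
        exact Nat.zero_le _
    · intro w hw
      have hzz := hJmem w (hsubm w hw)
      show w ∈ H.verts ∩ component H v
      exact Finset.mem_inter.2 ⟨hzz.1, Finset.mem_filter.2 ⟨hzz.1, hzz.2⟩⟩
  · intro e he hex w hw
    obtain ⟨z, hz, hzC⟩ := hex
    rw [component, Finset.mem_filter]
    refine ⟨H.edge_support e he w hw, ?_⟩
    by_cases hwz : w = z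
    · subst hwz; exact (Finset.mem_filter.1 hzC).2
    · have hrz : Reach H v z := (Finset.mem_filter.1 hzC).2
      refine hrz.tail ?_
      -- s(z, w) = e
      have : e = s(z, w) := by
        induction e using Sym2.ind with
        | _ a b =>
          rw [Sym2.mem_iff] at hz hw
          rcases hz with rfl | rfl <;> rcases hw with rfl | rfl
          · exact absurd rfl hwz
          · rfl
          · exact Sym2.eq_swap
          · exact absurd rfl hwz
      rwa [← this]


lemma component_subset_of_mem {H : MG V} {D D' : Finset V}
    (hD : IsComponent H D) (hD' : IsComponent H D') {v : V} (hv : v ∈ D) (hv' : v ∈ D') :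
    D ⊆ D' := by
  obtain ⟨hDsub, hDne, hDconn, hDcl⟩ := hD
  obtain ⟨hD'sub, hD'ne, hD'conn, hD'cl⟩ := hD'
  intro u hu
  have hu' : u ∈ (induce H D).verts := Finset.mem_inter.2 ⟨hDsub hu, hu⟩
  have hv'' : v ∈ (induce H D).verts := Finset.mem_inter.2 ⟨hDsub hv, hv⟩
  obtain ⟨l, ⟨hh, hl⟩, hle, hmem⟩ := hDconn u hu' v hv''
  -- trace the reversed walk from v
  refine walk_trace l.reverse v ?_ hv' ?_ u ?_
  · rw [List.head?_reverse]; exact hl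
  · intro a b hab ha
    have he : s(a, b) ∈ walkEdges l.reverse := mem_walkEdges_of_pair hab
    rw [walkEdges_reverse] at he
    have heH : s(a, b) ∈ H.edges := by
      have := Multiset.mem_of_le hle he
      exact (Multiset.mem_filter.1 this).1
    exact hD'cl _ heH ⟨a, Sym2.mem_mk_left _ _, ha⟩ b (Sym2.mem_mk_right _ _)
  · rw [List.mem_reverse]
    cases l with
    | nil => simp at hh
    | cons x t =>
      rw [List.head?_cons, Option.some_inj] at hh
      rw [hh]
      exact List.mem_cons_self

lemma component_eq' {H : MG V} {D D' : Finset V}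
    (hD : IsComponent H D) (hD' : IsComponent H D') {v : V} (hv : v ∈ D) (hv' : v ∈ D') :
    D = D' :=
  Finset.Subset.antisymm (component_subset_of_mem hD hD' hv hv')
    (component_subset_of_mem hD' hD hv' hv)


lemma mem_of_getLast?' {l : List V} {a : V} (h : l.getLast? = some a) : a ∈ l := by
  cases hl : l with
  | nil => rw [hl] at h; simp at h
  | cons x t =>
    have hne : l ≠ [] := by rw [hl]; simp
    rw [List.getLast?_eq_getLast_of_ne_nil hne] at h
    rw [← hl, ← Option.some_inj.1 h]
    exact List.getLast_mem hne

section TypeBCase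

variable {φ : Fin 4 → V}

lemma typeB_false {G : MG V} {x0 x1 : V} {m : ℕ} (hm : 2 ≤ m) (hne01 : x0 ≠ x1)
    (hφ0 : φ 0 = x0) (hφ1 : φ 1 = x1) (hinj : Function.Injective φ)
    (hrange : ∀ w, φ w ∈ G.verts)
    {P : Multiset (Sym2 (Fin 4) × List V)} (hPfst : P.map Prod.fst = dmEdges m)
    (hOK : ∀ p ∈ P, WOK φ p)
    (hPsum : (P.map fun p => walkEdges p.2).sum ≤ G.edges)
    (hTB : TypeB G m x0 x1) : False := by
  obtain ⟨k, C, nL, hCinj, hcomp, hlobes, hsumB⟩ := hTB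
  set H := deleteVerts G {x0, x1} with hHdef
  have hHverts : H.verts = G.verts \ {x0, x1} := by
    show G.verts ∩ (G.verts \ {x0, x1}) = _
    exact Finset.inter_eq_right.2 Finset.sdiff_subset
  have hHedges : ∀ e : Sym2 V,
      e ∈ H.edges ↔ e ∈ G.edges ∧ ∀ w ∈ e, w ∈ G.verts \ ({x0, x1} : Finset V) := by
    intro e
    show e ∈ G.edges.filter _ ↔ _
    rw [Multiset.mem_filter]
  have hnL2 : ∀ j, 2 ≤ nL j := fun j => (hlobes j).1
  choose ls hnd hwalk htf hcard2 hlobe using fun j => (hlobes j).2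
  have hIsComp : ∀ j, IsComponent H (C j) := fun j => (hcomp (C j)).2 ⟨j, rfl⟩
  have hCsub : ∀ j, C j ⊆ H.verts := fun j => (hIsComp j).1
  have hCnotx : ∀ j, ∀ z ∈ C j, z ≠ x0 ∧ z ≠ x1 := by
    intro j z hz
    have h2 := hCsub j hz
    rw [hHverts, Finset.mem_sdiff] at h2
    have := h2.2
    simp only [Finset.mem_insert, Finset.mem_singleton] at this
    push_neg at this
    exact this
  have hCeq : ∀ {i j : Fin k} {z : V}, z ∈ C i → z ∈ C j → i = j := by
    intro i j z hi hj
    exact hCinj (component_eq' (hIsComp i) (hIsComp j) hi hj)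
  have cover : ∀ z ∈ G.verts, z ≠ x0 → z ≠ x1 → ∃ j, z ∈ C j := by
    intro z hz h0 h1
    have hzH : z ∈ H.verts := by
      rw [hHverts, Finset.mem_sdiff]
      exact ⟨hz, by simp [h0, h1]⟩
    obtain ⟨j, hj⟩ := (hcomp (component H z)).1 (isComponent_component hzH)
    exact ⟨j, hj ▸ mem_component_self hzH⟩
  have hlshead : ∀ j, (ls j).head? = some x0 := fun j => (hwalk j).1
  have hlslast : ∀ j, (ls j).getLast? = some x1 := fun j => (hwalk j).2
  have hlsne : ∀ j, ls j ≠ [] := by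
    intro j h
    have := hlshead j
    rw [h] at this
    simp at this
  have hmem_ls : ∀ j, ∀ z, z ∈ ls j ↔ (z = x0 ∨ z = x1 ∨ z ∈ C j) := by
    intro j z
    rw [← List.mem_toFinset, htf j]
    simp
  have hlcons : ∀ j, ∃ t, ls j = x0 :: t ∧ t ≠ [] := by
    intro j
    cases hl : ls j with
    | nil => exact absurd hl (hlsne j)
    | cons a t =>
      have hh := hlshead j
      rw [hl, List.head?_cons, Option.some_inj] at hh
      subst hh
      refine ⟨t, rfl, ?_⟩
      intro ht
      subst ht
      have hg := hlslast j
      rw [hl] at hg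
      simp at hg
      exact hne01 hg
  have hdecomp : G.edges = Multiset.replicate (emult G x0 x1) s(x0, x1)
      + ∑ j : Fin k, lobeEdges G (C j) x0 x1 := by
    refine Multiset.ext.2 ?_
    intro e
    induction e using Sym2.ind with
    | _ a b =>
    rw [Multiset.count_add, Multiset.count_replicate, Multiset.count_sum']
    have hcl : ∀ j, Multiset.count s(a, b) (lobeEdges G (C j) x0 x1)
        = if ((∀ v ∈ s(a, b), v ∈ insert x0 (insert x1 (C j))) ∧ s(a, b) ≠ s(x0, x1))
          then Multiset.count s(a, b) G.edges else 0 := by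
      intro j
      rw [lobeEdges, Multiset.count_filter]
    by_cases he0 : s(a, b) = s(x0, x1)
    · rw [if_pos he0.symm]
      have hsum0 : ∑ j, Multiset.count s(a, b) (lobeEdges G (C j) x0 x1) = 0 :=
        Finset.sum_eq_zero (fun j _ => by rw [hcl j, if_neg]; simp [he0])
      rw [hsum0, add_zero, he0]
      rfl
    · rw [if_neg (fun h => he0 h.symm), zero_add]
      by_cases heG : s(a, b) ∈ G.edges
      · have hab : ¬ (s(a, b) : Sym2 V).IsDiag := G.loopless _ heG
        have habne : a ≠ b := by simpa [Sym2.mk_isDiag_iff] using hab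
        have key : ∃ u w, s(u, w) = s(a, b) ∧ u ≠ x0 ∧ u ≠ x1 := by
          by_cases ha : a ≠ x0 ∧ a ≠ x1
          · exact ⟨a, b, rfl, ha.1, ha.2⟩
          · rw [not_and_or, not_not, not_not] at ha
            refine ⟨b, a, Sym2.eq_swap, ?_, ?_⟩
            · intro hb0
              rcases ha with rfl | rfl
              · exact habne hb0.symm
              · exact he0 (by rw [hb0]; exact Sym2.eq_swap)
            · intro hb1
              rcases ha with rfl | rfl
              · exact he0 (by rw [hb1])
              · exact habne hb1.symm
        obtain ⟨u, w, huw, hu0, hu1⟩ := key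
        have humem : u ∈ s(a, b) := by rw [← huw]; exact Sym2.mem_mk_left _ _
        have huG : u ∈ G.verts := G.edge_support _ heG u humem
        obtain ⟨j0, hj0⟩ := cover u huG hu0 hu1
        have hum := Sym2.mem_iff.1 humem
        have hpred : ∀ v ∈ s(a, b), v ∈ insert x0 (insert x1 (C j0)) := by
          intro z hz
          by_cases hz0 : z = x0
          · simp [hz0]
          by_cases hz1 : z = x1
          · simp [hz1]
          have hzC : z ∈ C j0 := by
            by_cases hzu : z = u
            · rw [hzu]; exact hj0
            · have hzm := Sym2.mem_iff.1 hz
              have heH : s(a, b) ∈ H.edges := by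
                rw [hHedges]
                refine ⟨heG, ?_⟩
                intro y hy
                have hym := Sym2.mem_iff.1 hy
                rw [Finset.mem_sdiff]
                refine ⟨G.edge_support _ heG y hy, ?_⟩
                have ha' : a = u ∨ a = z := by
                  rcases hum with h | h
                  · exact Or.inl h.symm
                  · rcases hzm with h2 | h2
                    · exact Or.inr h2.symm
                    · exact absurd (h2.trans h.symm) hzu
                have hb' : b = u ∨ b = z := by
                  rcases hum with h | h
                  · rcases hzm with h2 | h2
                    · exact absurd (h2.trans h.symm) hzu
                    · exact Or.inr h2.symm
                  · exact Or.inl h.symm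
                have hyuz : y = u ∨ y = z := by
                  rcases hym with rfl | rfl
                  · exact ha'
                  · exact hb'
                rcases hyuz with rfl | rfl
                · simp [hu0, hu1]
                · simp [hz0, hz1]
              exact (hIsComp j0).2.2.2 _ heH ⟨u, humem, hj0⟩ z hz
          simp [hzC]
        have huniq : ∀ j', ((∀ v ∈ s(a, b), v ∈ insert x0 (insert x1 (C j')))
            ∧ s(a, b) ≠ s(x0, x1)) → j' = j0 := by
          rintro j' ⟨hp', -⟩
          have hu' := hp' u humem
          simp only [Finset.mem_insert, hu0, hu1, false_or] at hu'
          exact hCeq hu' hj0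
        rw [Finset.sum_eq_single j0]
        · rw [hcl j0, if_pos ⟨hpred, he0⟩]
        · intro j' _ hjne
          rw [hcl j', if_neg]
          intro hcontra
          exact hjne (huniq j' hcontra)
        · intro h
          exact absurd (Finset.mem_univ _) h
      · rw [Multiset.count_eq_zero_of_notMem heG]
        symm
        refine Finset.sum_eq_zero (fun j _ => ?_)
        rw [hcl j]
        split_ifs
        · exact Multiset.count_eq_zero_of_notMem heG
        · rfl
  have hdcut : ∀ X : Finset V, dcut G X = (if sepp X s(x0, x1) then emult G x0 x1 else 0)
      + ∑ j, nL j * crossN X (walkEdges (ls j)) := by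
    intro X
    rw [dcut_eq_crossN, hdecomp, crossN_add, crossN_replicate, crossN_finsum]
    congr 1
    refine Finset.sum_congr rfl (fun j _ => ?_)
    rw [hlobe j, crossN_nsmul]
  have hcross0 : ∀ j, crossN {x0} (walkEdges (ls j)) = 1 := by
    intro j
    obtain ⟨t, hlt, htne⟩ := hlcons j
    have hx0nt : x0 ∉ t := by
      have := hnd j
      rw [hlt] at this
      exact (List.nodup_cons.1 this).1
    rw [hlt, show (x0 :: t) = [x0] ++ t from rfl]
    refine crossN_walk_in_out _ [x0] (by simp) t htne (by simp) ?_
    intro b hb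
    simp only [Finset.mem_singleton]
    intro hbx
    exact hx0nt (hbx ▸ hb)
  have hcross1 : ∀ j, crossN {x1} (walkEdges (ls j)) = 1 := by
    intro j
    have hnej := hlsne j
    have hgl : (ls j).getLast hnej = x1 := by
      have := hlslast j
      rw [List.getLast?_eq_getLast_of_ne_nil hnej] at this
      exact Option.some_inj.1 this
    have hdl : (ls j).dropLast ++ [x1] = ls j := by
      rw [← hgl]
      exact List.dropLast_append_getLast hnej
    have hndj := hnd j
    rw [← hdl] at hndj
    have hdlne : (ls j).dropLast ≠ [] := by
      intro h0
      rw [h0] at hdl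
      have := hlshead j
      rw [← hdl] at this
      simp at this
      exact hne01 this.symm
    rw [← hdl]
    refine crossN_walk_out_in _ _ hdlne [x1] (by simp) ?_ (by simp)
    intro a ha
    simp only [Finset.mem_singleton]
    intro hax
    have hdisj := List.disjoint_of_nodup_append hndj
    exact hdisj ha (by simp [hax])
  have hsepp01_0 : sepp ({x0} : Finset V) s(x0, x1) := by
    rw [sepp_iff]
    simp [Ne.symm hne01]
  have hd_x0 : dcut G {x0} = m + 1 := by
    rw [hdcut, if_pos hsepp01_0]
    have hs : ∑ j, nL j * crossN {x0} (walkEdges (ls j)) = ∑ j, nL j :=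
      Finset.sum_congr rfl (fun j _ => by rw [hcross0 j, mul_one])
    rw [hs]
    exact hsumB
  have hsepp01_1 : sepp ({x1} : Finset V) s(x0, x1) := by
    rw [sepp_iff]
    simp [hne01]
  have hd_x1 : dcut G {x1} = m + 1 := by
    rw [hdcut, if_pos hsepp01_1]
    have hs : ∑ j, nL j * crossN {x1} (walkEdges (ls j)) = ∑ j, nL j :=
      Finset.sum_congr rfl (fun j _ => by rw [hcross1 j, mul_one])
    rw [hs]
    exact hsumB
  have hd_y : ∀ (i : Fin k) (y : V), y ∈ C i → nL i = 2 → dcut G {y} = 4 := by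
    intro i y hyC hnLi
    obtain ⟨hy0, hy1⟩ := hCnotx i y hyC
    rw [hdcut]
    have hsep : ¬ sepp ({y} : Finset V) s(x0, x1) := by
      rw [sepp_iff, not_not]
      simp [Ne.symm hy0, Ne.symm hy1]
    rw [if_neg hsep, zero_add]
    rw [Finset.sum_eq_single i]
    · have hyl : y ∈ ls i := (hmem_ls i y).2 (Or.inr (Or.inr hyC))
      obtain ⟨A, B, hAB⟩ := List.append_of_mem hyl
      have hndl := hnd i
      rw [hAB] at hndl
      have hyB : ∀ b ∈ B, b ∉ ({y} : Finset V) := by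
        intro b hb
        simp only [Finset.mem_singleton]
        intro hby
        have := (List.nodup_append.1 hndl).2.1
        exact (List.nodup_cons.1 this).1 (hby ▸ hb)
      have hyA : ∀ a ∈ A, a ∉ ({y} : Finset V) := by
        intro a ha
        simp only [Finset.mem_singleton]
        intro hay
        have hdisj := (List.nodup_append.1 hndl).2.2
        exact hdisj a ha y (by simp) hay
      have hAne : A ≠ [] := by
        intro h0
        have := hlshead i
        rw [hAB, h0] at this
        simp at this
        exact hy0 this
      have hBne : B ≠ [] := by
        intro h0
        have := hlslast i
        rw [hAB, h0, List.getLast?_concat] at this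
        simp at this
        exact hy1 this
      rw [hAB, crossN_walk_mid _ hAne hBne hyA (by simp) hyB, hnLi]
    · intro j _ hji
      have hz : ∀ a ∈ ls j, a ∉ ({y} : Finset V) := by
        intro a ha
        simp only [Finset.mem_singleton]
        intro hay
        subst hay
        rcases (hmem_ls j a).1 ha with rfl | rfl | haC
        · exact hy0 rfl
        · exact hy1 rfl
        · exact hji (hCeq haC hyC)
      rw [crossN_walk_zero_out _ _ hz, mul_zero]
    · intro h
      exact absurd (Finset.mem_univ _) h
  -- distinctness of terminal images
  have dphi : ∀ a b : Fin 4, a ≠ b → φ a ≠ φ b := fun a b hab h => hab (hinj h)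
  have h2x0 : φ 2 ≠ x0 := by rw [← hφ0]; exact dphi 2 0 (by decide)
  have h2x1 : φ 2 ≠ x1 := by rw [← hφ1]; exact dphi 2 1 (by decide)
  have h3x0 : φ 3 ≠ x0 := by rw [← hφ0]; exact dphi 3 0 (by decide)
  have h3x1 : φ 3 ≠ x1 := by rw [← hφ1]; exact dphi 3 1 (by decide)
  have h23 : φ 2 ≠ φ 3 := dphi 2 3 (by decide)
  -- separation counts
  have hSx0 : (P.filter (fun p => sepE φ ({x0} : Finset V) p.1)).card = m := by
    rw [filter_card_transfer hPfst, scard]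
    simp [sepE_mk, hφ0, hφ1, Ne.symm hne01, h2x0, h3x0]
    omega
  have hSx1 : (P.filter (fun p => sepE φ ({x1} : Finset V) p.1)).card = m := by
    rw [filter_card_transfer hPfst, scard]
    simp [sepE_mk, hφ0, hφ1, hne01, h2x1, h3x1]
    omega
  have hS2 : (P.filter (fun p => sepE φ ({φ 2} : Finset V) p.1)).card = 3 := by
    rw [filter_card_transfer hPfst, scard]
    simp [sepE_mk, hφ0, hφ1, Ne.symm h2x0, Ne.symm h2x1, Ne.symm h23]
  have hS3 : (P.filter (fun p => sepE φ ({φ 3} : Finset V) p.1)).card = 3 := by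
    rw [filter_card_transfer hPfst, scard]
    simp [sepE_mk, hφ0, hφ1, Ne.symm h3x0, Ne.symm h3x1, h23]
  -- forced crossing numbers at the root cuts
  have hfx0 : ∀ p ∈ P, crossN {x0} (walkEdges p.2) = if sepE φ {x0} p.1 then 1 else 0 :=
    fun p hp => force hOK hPsum ({x0} : Finset V) (by rw [hd_x0, hSx0]) hp
  have hfx1 : ∀ p ∈ P, crossN {x1} (walkEdges p.2) = if sepE φ {x1} p.1 then 1 else 0 :=
    fun p hp => force hOK hPsum ({x1} : Finset V) (by rw [hd_x1, hSx1]) hp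
  -- existence of demand walks
  have hexists : ∀ e : Sym2 (Fin 4), e ∈ dmEdges m → ∃ p ∈ P, p.1 = e := by
    intro e he
    rw [← hPfst] at he
    obtain ⟨p, hp, hpe⟩ := Multiset.mem_map.1 he
    exact ⟨p, hp, hpe⟩
  have horient : ∀ p ∈ P, ∀ (u v : Fin 4), p.1 = s(u, v) →
      ∃ W : List V, IsWalk W (φ u) (φ v) ∧ walkEdges W = walkEdges p.2 := by
    intro p hp u v hpe
    obtain ⟨a, b, hab, hw⟩ := hOK p hp
    rw [hpe] at hab
    rcases Sym2.eq_iff.1 hab with ⟨h1, h2⟩ | ⟨h1, h2⟩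
    · subst h1; subst h2; exact ⟨p.2, hw, rfl⟩
    · subst h1; subst h2; exact ⟨p.2.reverse, isWalk_reverse hw, walkEdges_reverse _⟩
  -- tracing inside a component
  have htraceC : ∀ (W : List V) (j : Fin k) (h : V), W.head? = some h → h ∈ C j →
      walkEdges W ≤ G.edges → crossN {x0} (walkEdges W) = 0 → crossN {x1} (walkEdges W) = 0 →
      ∀ z ∈ W, z ∈ C j := by
    intro W j h hWh hhC hWle hc0 hc1
    refine walk_trace W h hWh hhC ?_
    intro a b hab haC
    have he : s(a, b) ∈ walkEdges W := mem_walkEdges_of_pair hab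
    have heG : s(a, b) ∈ G.edges := Multiset.mem_of_le hWle he
    obtain ⟨ha0, ha1⟩ := hCnotx j a haC
    have hb0 : b ≠ x0 := by
      intro h'
      have hs : sepp ({x0} : Finset V) s(a, b) := sepp_iff.2 (by simp [h', ha0])
      have := one_le_crossN_of_mem he hs
      omega
    have hb1 : b ≠ x1 := by
      intro h'
      have hs : sepp ({x1} : Finset V) s(a, b) := sepp_iff.2 (by simp [h', ha1])
      have := one_le_crossN_of_mem he hs
      omega
    have hbv : b ∈ G.verts := G.edge_support _ heG b (Sym2.mem_mk_right _ _)
    have heH : s(a, b) ∈ H.edges := by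
      rw [hHedges]
      refine ⟨heG, ?_⟩
      intro y hy
      rw [Sym2.mem_iff] at hy
      rcases hy with rfl | rfl
      · rw [Finset.mem_sdiff]
        exact ⟨G.edge_support _ heG _ (Sym2.mem_mk_left _ _), by simp [ha0, ha1]⟩
      · rw [Finset.mem_sdiff]
        exact ⟨hbv, by simp [hb0, hb1]⟩
    exact (hIsComp j).2.2.2 _ heH ⟨a, Sym2.mem_mk_left _ _, haC⟩ b (Sym2.mem_mk_right _ _)
  -- the component of φ 2
  obtain ⟨i, hφ2C⟩ := cover (φ 2) (hrange 2) h2x0 h2x1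
  -- the y0-y1 walk stays in C i, so φ 3 ∈ C i
  obtain ⟨p23, hp23P, hp23⟩ := hexists s((2 : Fin 4), (3 : Fin 4)) (by simp [dmEdges])
  obtain ⟨W23, hW23walk, hW23e⟩ := horient p23 hp23P 2 3 hp23
  have hW23le : walkEdges W23 ≤ G.edges := by
    rw [hW23e]
    exact le_trans (mem_le_sum (Multiset.mem_map_of_mem (fun p => walkEdges p.2) hp23P)) hPsum
  have h23x0 : crossN {x0} (walkEdges W23) = 0 := by
    rw [hW23e, hfx0 p23 hp23P, if_neg]
    rw [hp23, sepE_mk, not_not]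
    simp [h2x0, h3x0]
  have h23x1 : crossN {x1} (walkEdges W23) = 0 := by
    rw [hW23e, hfx1 p23 hp23P, if_neg]
    rw [hp23, sepE_mk, not_not]
    simp [h2x1, h3x1]
  have hφ3C : φ 3 ∈ C i := by
    have hall := htraceC W23 i (φ 2) hW23walk.1 hφ2C hW23le h23x0 h23x1
    exact hall _ (mem_of_getLast?' hW23walk.2)
  have hci2 : 2 ≤ (C i).card := by
    have hss : ({φ 2, φ 3} : Finset V) ⊆ C i := by
      intro x hx
      simp only [Finset.mem_insert, Finset.mem_singleton] at hx
      rcases hx with rfl | rfl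
      · exact hφ2C
      · exact hφ3C
    have hc2 : ({φ 2, φ 3} : Finset V).card = 2 := by
      rw [Finset.card_insert_of_notMem (by simp [h23]), Finset.card_singleton]
    calc 2 = ({φ 2, φ 3} : Finset V).card := hc2.symm
    _ ≤ (C i).card := Finset.card_le_card hss
  have hnLi : nL i = 2 := hcard2 i hci2
  have hf2 : ∀ p ∈ P, crossN {φ 2} (walkEdges p.2) = if sepE φ {φ 2} p.1 then 1 else 0 :=
    fun p hp => force hOK hPsum _ (by rw [hd_y i (φ 2) hφ2C hnLi, hS2]) hp
  have hf3 : ∀ p ∈ P, crossN {φ 3} (walkEdges p.2) = if sepE φ {φ 3} p.1 then 1 else 0 :=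
    fun p hp => force hOK hPsum _ (by rw [hd_y i (φ 3) hφ3C hnLi, hS3]) hp
  -- the final routing contradiction
  have final : ∀ (yv zv : V) (A B : List V) (W : List V),
      yv ∈ C i → zv ∈ C i → ls i = A ++ yv :: B → zv ∈ B →
      IsWalk W x0 zv → walkEdges W ≤ G.edges →
      crossN {x0} (walkEdges W) = 1 → crossN {x1} (walkEdges W) = 0 →
      crossN {yv} (walkEdges W) = 0 → False := by
    intro yv zv A B W hyC hzC hlsAB hzB hWwalk hWle hcx0 hcx1 hcy
    obtain ⟨hy0, hy1⟩ := hCnotx i yv hyC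
    obtain ⟨hz0, hz1⟩ := hCnotx i zv hzC
    -- W = x0 :: w1 :: T'
    obtain ⟨T, hWT⟩ : ∃ T, W = x0 :: T := by
      cases hW : W with
      | nil => rw [hW] at hWwalk; exact absurd hWwalk.1 (by simp)
      | cons a T =>
        have := hWwalk.1
        rw [hW, List.head?_cons, Option.some_inj] at this
        exact ⟨T, by rw [this]⟩
    have hTne : T ≠ [] := by
      intro h
      rw [hWT, h] at hWwalk
      have := hWwalk.2
      simp at this
      exact hz0 this.symm
    obtain ⟨w1, T', hT⟩ : ∃ w1 T', T = w1 :: T' := by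
      cases T with
      | nil => exact absurd rfl hTne
      | cons w1 T' => exact ⟨w1, T', rfl⟩
    have hWeq : walkEdges W = s(x0, w1) ::ₘ walkEdges T := by
      rw [hWT, hT]
      rfl
    have hfirstG : s(x0, w1) ∈ G.edges :=
      Multiset.mem_of_le hWle (by rw [hWeq]; exact Multiset.mem_cons_self _ _)
    have hfirstW : s(x0, w1) ∈ walkEdges W := by
      rw [hWeq]; exact Multiset.mem_cons_self _ _
    have hw1x0 : w1 ≠ x0 := by
      intro h
      refine G.loopless _ hfirstG ?_
      rw [h]
      exact Sym2.mk_isDiag_iff.2 rfl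
    have hcT0 : crossN {x0} (walkEdges T) = 0 := by
      have hsx : sepp ({x0} : Finset V) s(x0, w1) := sepp_iff.2 (by simp [hw1x0])
      rw [hWeq, crossN_cons, if_pos hsx] at hcx0
      omega
    have hw1x1 : w1 ≠ x1 := by
      intro h
      have hs : sepp ({x1} : Finset V) s(x0, w1) := sepp_iff.2 (by simp [h, hne01])
      have := one_le_crossN_of_mem hfirstW hs
      omega
    have hw1y : w1 ≠ yv := by
      intro h
      have hs : sepp ({yv} : Finset V) s(x0, w1) := sepp_iff.2 (by simp [h, hy0, Ne.symm hy0])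
      have := one_le_crossN_of_mem hfirstW hs
      omega
    have hw1v : w1 ∈ G.verts := G.edge_support _ hfirstG _ (Sym2.mem_mk_right _ _)
    obtain ⟨j, hw1C⟩ := cover w1 hw1v hw1x0 hw1x1
    have hTle : walkEdges T ≤ G.edges := by
      refine le_trans ?_ hWle
      rw [hWeq]
      exact Multiset.le_cons_self _ _
    have hcT1 : crossN {x1} (walkEdges T) = 0 := by
      have h1 : crossN {x1} (walkEdges T) ≤ crossN {x1} (walkEdges W) :=
        crossN_le _ (by rw [hWeq]; exact Multiset.le_cons_self _ _)
      omega
    have hcTy : crossN {yv} (walkEdges T) = 0 := by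
      have h1 : crossN {yv} (walkEdges T) ≤ crossN {yv} (walkEdges W) :=
        crossN_le _ (by rw [hWeq]; exact Multiset.le_cons_self _ _)
      omega
    have hallT : ∀ z' ∈ T, z' ∈ C j :=
      htraceC T j w1 (by rw [hT]; rfl) hw1C hTle hcT0 hcT1
    have hzT : zv ∈ T := by
      have hTl : T.getLast? = some zv := by
        have := hWwalk.2
        rw [hWT, show x0 :: T = [x0] ++ T from rfl,
          List.getLast?_append_of_ne_nil _ hTne] at this
        exact this
      exact mem_of_getLast?' hTl
    have hzB' : zv ∈ C i := hzC
    have hCji : C j = C i :=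
      component_eq' (hIsComp j) (hIsComp i) (hallT _ hzT) hzB'
    rw [hCji] at hw1C hallT
    -- first edge is a lobe edge; w1 is the second vertex of ls i
    have hfirstlobe : s(x0, w1) ∈ lobeEdges G (C i) x0 x1 := by
      rw [lobeEdges, Multiset.mem_filter]
      refine ⟨hfirstG, ?_, ?_⟩
      · intro v hv
        rw [Sym2.mem_iff] at hv
        rcases hv with rfl | rfl
        · exact Finset.mem_insert_self _ _
        · exact Finset.mem_insert_of_mem (Finset.mem_insert_of_mem hw1C)
      · intro h
        rcases Sym2.eq_iff.1 h with ⟨h1, h2⟩ | ⟨h1, h2⟩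
        · exact hw1x1 h2
        · exact hne01 h1
    have hfirstwe : s(x0, w1) ∈ walkEdges (ls i) := by
      rw [hlobe i] at hfirstlobe
      exact (Multiset.mem_nsmul.1 hfirstlobe).2
    obtain ⟨pr, hpr, hpre⟩ := mem_walkEdges.1 hfirstwe
    obtain ⟨t0, hlst0, ht0ne⟩ := hlcons i
    have hndls := hnd i
    have hx0pr : pr.1 = x0 ∨ pr.2 = x0 := by
      rcases Sym2.eq_iff.1 hpre with ⟨h1, h2⟩ | ⟨h1, h2⟩
      · exact Or.inl h1
      · exact Or.inr h2
    obtain ⟨b2, t0', ht0eq, hpreq⟩ :=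
      pair_head (hlst0 ▸ hndls) (by rw [hlst0] at hpr; exact hpr) hx0pr
    have hw1b2 : w1 = b2 := by
      rw [hpreq] at hpre
      rcases Sym2.eq_iff.1 hpre with ⟨h1, h2⟩ | ⟨h1, h2⟩
      · exact h2.symm
      · exact absurd h1.symm hw1x0
    obtain ⟨A', hA⟩ : ∃ A', A = x0 :: A' := by
      cases hA : A with
      | nil =>
        exfalso
        have := hlshead i
        rw [hlsAB, hA] at this
        simp at this
        exact hy0 this
      | cons a A' =>
        have := hlshead i
        rw [hlsAB, hA] at this
        simp at this
        exact ⟨A', by rw [this]⟩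
    have ht0AB : t0 = A' ++ yv :: B := by
      have h1 : ls i = x0 :: (A' ++ yv :: B) := by rw [hlsAB, hA]; rfl
      rw [hlst0] at h1
      exact (List.cons.injEq _ _ _ _ ▸ h1).2
    cases hA' : A' with
    | nil =>
      have hb2y : b2 = yv := by
        rw [hA', List.nil_append] at ht0AB
        rw [ht0AB] at ht0eq
        exact (List.cons.injEq _ _ _ _ ▸ ht0eq).1.symm
      exact hw1y (hw1b2.trans hb2y)
    | cons a1 A'' =>
      have hb2a1 : b2 = a1 := by
        rw [hA', List.cons_append] at ht0AB
        rw [ht0AB] at ht0eq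
        exact (List.cons.injEq _ _ _ _ ▸ ht0eq).1.symm
      set M : Finset V := (x0 :: a1 :: A'').toFinset with hMdef
      have hx0M : x0 ∈ M := by simp [hMdef]
      have hndfull : ((x0 :: a1 :: A'') ++ (yv :: B)).Nodup := by
        have := hndls
        rw [hlsAB, hA, hA'] at this
        exact this
      have hdisj := List.disjoint_of_nodup_append hndfull
      have hyM : yv ∉ M := by
        intro hmem
        rw [hMdef, List.mem_toFinset] at hmem
        exact hdisj hmem List.mem_cons_self
      have hzM : zv ∉ M := by
        intro hmem
        rw [hMdef, List.mem_toFinset] at hmem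
        exact hdisj hmem (List.mem_cons_of_mem _ hzB)
      have hcrossM : 1 ≤ crossN M (walkEdges W) := by
        refine crossN_walk_pos M hWwalk.1 hWwalk.2 ?_
        simp [hx0M, hzM]
      obtain ⟨e, heW, hesep⟩ := exists_sepp_of_crossN_pos hcrossM
      obtain ⟨α, β, heαβ, hαM, hβM⟩ := hesep
      obtain ⟨qr, hqr, hqre⟩ := mem_walkEdges.1 heW
      have hWzip : W.zip W.tail = (x0, w1) :: (T.zip T.tail) := by
        rw [hWT, hT]
        rfl
      rw [hWzip] at hqr
      have hw1M : w1 ∈ M := by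
        rw [hw1b2, hb2a1]
        simp [hMdef]
      rcases List.mem_cons.1 hqr with hfirst | hrest
      · rw [hfirst] at hqre
        rcases Sym2.eq_iff.1 (hqre.trans heαβ) with ⟨h1, h2⟩ | ⟨h1, h2⟩
        · exact hβM (h2 ▸ hw1M)
        · exact hβM (h1 ▸ hx0M)
      · have hmm := of_mem_zip_tail hrest
        have hq1C : qr.1 ∈ C i := hallT _ hmm.1
        have hq2C : qr.2 ∈ C i := hallT _ hmm.2
        have hαβmem : (α ∈ C i ∧ β ∈ C i) := by
          rcases Sym2.eq_iff.1 (hqre.trans heαβ) with ⟨h1, h2⟩ | ⟨h1, h2⟩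
          · exact ⟨h1 ▸ hq1C, h2 ▸ hq2C⟩
          · exact ⟨h2 ▸ hq2C, h1 ▸ hq1C⟩
        have hαy : α ≠ yv := fun h => hyM (h ▸ hαM)
        have hβy : β ≠ yv := by
          intro h
          have hs : sepp ({yv} : Finset V) e := by
            rw [heαβ]
            exact sepp_iff.2 (by simp [h, hαy])
          have h1 : crossN {yv} (walkEdges W) ≠ 0 := by
            have := one_le_crossN_of_mem heW hs
            omega
          exact h1 hcy
        have heG' : e ∈ G.edges := Multiset.mem_of_le hWle heW
        have helobe : e ∈ lobeEdges G (C i) x0 x1 := by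
          rw [lobeEdges, Multiset.mem_filter]
          refine ⟨heG', ?_, ?_⟩
          · intro v hv
            rw [heαβ, Sym2.mem_iff] at hv
            rcases hv with rfl | rfl
            · exact Finset.mem_insert_of_mem (Finset.mem_insert_of_mem hαβmem.1)
            · exact Finset.mem_insert_of_mem (Finset.mem_insert_of_mem hαβmem.2)
          · intro hcon
            rw [heαβ] at hcon
            rcases Sym2.eq_iff.1 hcon with ⟨h1, h2⟩ | ⟨h1, h2⟩
            · exact (hCnotx i α hαβmem.1).1 h1
            · exact (hCnotx i α hαβmem.1).2 h1
        have hewe : e ∈ walkEdges (ls i) := by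
          rw [hlobe i] at helobe
          exact (Multiset.mem_nsmul.1 helobe).2
        obtain ⟨rr, hrr, hrre⟩ := mem_walkEdges.1 hewe
        have hlssplit : (ls i).zip (ls i).tail
            = (((x0 :: a1 :: A'') ++ [yv]).zip ((x0 :: a1 :: A'') ++ [yv]).tail)
              ++ ((yv :: B).zip B) := by
          have h1 : ls i = (x0 :: a1 :: A'') ++ yv :: B := by rw [hlsAB, hA, hA']
          rw [h1, zip_tail_splice]
        rw [hlssplit] at hrr
        rcases List.mem_append.1 hrr with hr1 | hr2
        · have hmm2 := of_mem_zip_tail hr1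
          have hβmem : β ∈ (x0 :: a1 :: A'') ++ [yv] := by
            rcases Sym2.eq_iff.1 (hrre.trans heαβ) with ⟨h1, h2⟩ | ⟨h1, h2⟩
            · exact h2 ▸ hmm2.2
            · exact h1 ▸ hmm2.1
          rcases List.mem_append.1 hβmem with h' | h'
          · exact hβM (by rw [hMdef, List.mem_toFinset]; exact h')
          · simp at h'
            exact hβy h'
        · have hmm2 := of_mem_zip_tail (l := yv :: B) hr2
          have hαmem : α ∈ yv :: B := by
            rcases Sym2.eq_iff.1 (hrre.trans heαβ) with ⟨h1, h2⟩ | ⟨h1, h2⟩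
            · exact h1 ▸ hmm2.1
            · exact h2 ▸ hmm2.2
          have hαl : α ∈ x0 :: a1 :: A'' := by
            rw [hMdef, List.mem_toFinset] at hαM
            exact hαM
          exact hdisj hαl hαmem
  -- invoke the final contradiction
  have hφ2ls : φ 2 ∈ ls i := (hmem_ls i _).2 (Or.inr (Or.inr hφ2C))
  have hφ3ls : φ 3 ∈ ls i := (hmem_ls i _).2 (Or.inr (Or.inr hφ3C))
  obtain ⟨A2, B2, hAB2⟩ := List.append_of_mem hφ2ls
  by_cases h3B : φ 3 ∈ B2
  · -- walk for s(0,3)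
    obtain ⟨p03, hp03P, hp03⟩ := hexists s((0 : Fin 4), (3 : Fin 4)) (by simp [dmEdges])
    obtain ⟨W, hWwalk, hWe⟩ := horient p03 hp03P 0 3 hp03
    rw [hφ0] at hWwalk
    refine final (φ 2) (φ 3) A2 B2 W hφ2C hφ3C hAB2 h3B hWwalk ?_ ?_ ?_ ?_
    · rw [hWe]
      exact le_trans (mem_le_sum (Multiset.mem_map_of_mem (fun p => walkEdges p.2) hp03P)) hPsum
    · rw [hWe, hfx0 p03 hp03P, if_pos]
      rw [hp03, sepE_mk]
      simp [hφ0, hφ1, h3x0]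
    · rw [hWe, hfx1 p03 hp03P, if_neg]
      rw [hp03, sepE_mk, not_not]
      simp [hφ0, hφ1, hne01, h3x1]
    · rw [hWe, hf2 p03 hp03P, if_neg]
      rw [hp03, sepE_mk, not_not]
      simp [hφ0, Ne.symm h2x0, Ne.symm h23]
  · have h3A : φ 3 ∈ A2 := by
      have := hφ3ls
      rw [hAB2] at this
      rcases List.mem_append.1 this with h' | h'
      · exact h'
      · rcases List.mem_cons.1 h' with h'' | h''
        · exact absurd h'' (Ne.symm h23).elim
        · exact absurd h'' h3B
    obtain ⟨A3, B3, hA3⟩ := List.append_of_mem h3A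
    obtain ⟨p02, hp02P, hp02⟩ := hexists s((0 : Fin 4), (2 : Fin 4)) (by simp [dmEdges])
    obtain ⟨W, hWwalk, hWe⟩ := horient p02 hp02P 0 2 hp02
    rw [hφ0] at hWwalk
    refine final (φ 3) (φ 2) A3 (B3 ++ φ 2 :: B2) W hφ3C hφ2C ?_ (by simp) hWwalk ?_ ?_ ?_ ?_
    · rw [hAB2, hA3]
      simp
    · rw [hWe]
      exact le_trans (mem_le_sum (Multiset.mem_map_of_mem (fun p => walkEdges p.2) hp02P)) hPsum
    · rw [hWe, hfx0 p02 hp02P, if_pos]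
      rw [hp02, sepE_mk]
      simp [hφ0, hφ1, h2x0]
    · rw [hWe, hfx1 p02 hp02P, if_neg]
      rw [hp02, sepE_mk, not_not]
      simp [hφ0, hφ1, hne01, h2x1]
    · rw [hWe, hf3 p02 hp02P, if_neg]
      rw [hp02, sepE_mk, not_not]
      simp [hφ0, Ne.symm h3x0, h23]

end TypeBCase

end Stmt10Aux







/-- Let `m ≥ 2` and let `G` be a rooted graph with roots `x0, x1`
such that `|V(G)| ≥ 4`, `λ_n(G) ≥ 3`, `λ_n^i(G) ≥ 4`, and `λ_s(G) ≥ m`.  If `G` has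
type `A_m` or type `B_m`, then `G` has no rooted immersion of `D_m`. -/
theorem statement_10 {V : Type} (G : MG V) (x0 x1 : V) (m : ℕ)
    (hm : 2 ≤ m) (hconn : Connected G)
    (hx0 : x0 ∈ G.verts) (hx1 : x1 ∈ G.verts) (hne : x0 ≠ x1)
    (hcard : 4 ≤ G.verts.card)
    (hln : LamNGe G x0 x1 3) (hlni : LamNiGe G x0 x1 4) (hls : LamSGe G x0 x1 m)
    (htype : TypeA G m x0 x1 ∨ TypeB G m x0 x1) :
    ¬ HasRootedDmImmersion G m x0 x1 := by
  intro himm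
  obtain ⟨φ, hφ0, hφ1, hinj, hrange, P, hPfst, hPwalk, hPsum⟩ := himm
  rcases htype with hTA | hTB
  · exact typeA_false hm hφ0 hφ1 hinj hrange hPfst hPwalk hPsum hTA
  · exact typeB_false hm hne hφ0 hφ1 hinj hrange hPfst hPwalk hPsum hTB

end PaperW4
end
end

section
/- Let G be a graph with root x that has a rooted immersion of W_4 with terminal set T. If v ∈ T ∖ {x} has even degree, then there is an edge e incident with v such that G − e has a rooted immersion of W_4. -/
open scoped Classical

noncomputable section

namespace PaperW4

variable {V : Type} {W : Type}

/-- Parity of the number of edge-incidences of a vertex along a walk. -/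
lemma walk_countP_parity (v : V) :
    ∀ l : List V, (∀ e ∈ walkEdges l, ¬ e.IsDiag) → l ≠ [] →
    Even (Multiset.countP (fun e => v ∈ e) (walkEdges l)
      + (if l.head? = some v then 1 else 0)
      + (if l.getLast? = some v then 1 else 0)) := by
  intro l
  induction l with
  | nil => intro _ h; exact absurd rfl h
  | cons a t ih =>
    intro hnd _
    cases t with
    | nil =>
      have : walkEdges [a] = 0 := rfl
      simp only [this, Multiset.countP_zero, List.head?_cons, List.getLast?_singleton,
        Option.some_inj, Nat.zero_add]
      split_ifs <;> simp [Nat.even_iff]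
    | cons b t' =>
      have hstep : walkEdges (a :: b :: t') = s(a, b) ::ₘ walkEdges (b :: t') := rfl
      have hab : a ≠ b := by
        have := hnd s(a, b) (by rw [hstep]; exact Multiset.mem_cons_self _ _)
        simpa [Sym2.mk_isDiag_iff] using this
      have hnd' : ∀ e ∈ walkEdges (b :: t'), ¬ e.IsDiag := by
        intro e he
        exact hnd e (by rw [hstep]; exact Multiset.mem_cons_of_mem he)
      have hIH := ih hnd' (by simp)
      rw [hstep, Multiset.countP_cons, List.getLast?_cons_cons]
      simp only [List.head?_cons, Option.some_inj] at hIH ⊢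
      have hmemab : (if v ∈ s(a, b) then (1 : ℕ) else 0)
          = (if a = v then 1 else 0) + (if b = v then 1 else 0) := by
        by_cases h1 : a = v <;> by_cases h2 : b = v
        · exact absurd (h1.trans h2.symm) hab
        · simp [Sym2.mem_iff, h1, h2]
        · simp [Sym2.mem_iff, h1, h2]
        · simp [Sym2.mem_iff, h1, h2, Ne.symm h1, Ne.symm h2]
      rw [hmemab]
      obtain ⟨k, hk⟩ := hIH
      refine ⟨(if a = v then 1 else 0) + k, ?_⟩
      omega

/-- countP of a sum of multisets. -/
lemma countP_sum_map {α β : Type*} (p : β → Prop) [DecidablePred p]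
    (P : Multiset α) (f : α → Multiset β) :
    Multiset.countP p ((P.map f).sum)
      = (P.map fun a => Multiset.countP p (f a)).sum := by
  induction P using Multiset.induction_on with
  | empty => simp
  | cons a s ih => simp [Multiset.countP_add, ih]

lemma even_multiset_sum (s : Multiset ℕ) (h : ∀ x ∈ s, Even x) : Even s.sum := by
  induction s using Multiset.induction_on with
  | empty => simp
  | cons a t ih =>
    simp only [Multiset.sum_cons]
    exact (h a (Multiset.mem_cons_self a t)).add
      (ih fun x hx => h x (Multiset.mem_cons_of_mem hx))

lemma sum_map_indicator {α : Type*} (p : α → Prop) [DecidablePred p] (s : Multiset α) :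
    (s.map fun a => if p a then 1 else 0).sum = Multiset.countP p s := by
  induction s using Multiset.induction_on with
  | empty => simp
  | cons a t ih => simp [Multiset.countP_cons, ih]; split_ifs <;> omega

/-- Let `G` be a graph with root `x` that has a rooted immersion of
`W₄` with terminal set `T` (the image of the injection `φ`).  If `v ∈ T ∖ {x}` has
even degree, then there is an edge `e` incident with `v` such that `G - e` has a
rooted immersion of `W₄`. -/
theorem statement_12 {V : Type} (G : MG V) (x : V)
    (φ : Fin 5 → V) (h0 : φ 0 = x) (himm : ImmersionVia G w4Edges φ)
    (v : V) (hvT : v ∈ Finset.univ.image φ) (hvx : v ≠ x)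
    (hdeg : Even (deg G v)) :
    ∃ e ∈ G.edges, v ∈ e ∧ HasRootedW4Immersion (deleteEdge G e) x := by
  obtain ⟨i, -, hφi⟩ := Finset.mem_image.mp hvT
  obtain ⟨hinj, hverts, P, hPfst, hPwalk, hPsum⟩ := himm
  have hi0 : i ≠ 0 := by rintro rfl; exact hvx (hφi ▸ h0 ▸ rfl)
  set S : Multiset (Sym2 V) := (P.map fun p => walkEdges p.2).sum with hS
  -- every edge of every walk is an edge of G, hence non-diagonal
  have hwle : ∀ p ∈ P, walkEdges p.2 ≤ S := by
    intro p hp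
    exact Multiset.single_le_sum (fun x _ => zero_le) _
      (Multiset.mem_map_of_mem _ hp)
  have hnd : ∀ p ∈ P, ∀ e ∈ walkEdges p.2, ¬ e.IsDiag := by
    intro p hp e he
    exact G.loopless e (Multiset.mem_of_le hPsum (Multiset.mem_of_le (hwle p hp) he))
  -- all W4 edges are non-diagonal
  have hw4nd : ∀ e ∈ w4Edges, ¬ e.IsDiag := by decide
  -- per-walk parity with indicator of i ∈ p.1
  have hper : ∀ p ∈ P, Even (Multiset.countP (fun e => v ∈ e) (walkEdges p.2)
      + (if i ∈ p.1 then 1 else 0)) := by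
    intro p hp
    obtain ⟨u, w, hp1, hhead, hlast⟩ := hPwalk p hp
    have hne : p.2 ≠ [] := by
      intro h; rw [h] at hhead; simp at hhead
    have hpar := walk_countP_parity v p.2 (hnd p hp) hne
    rw [hhead, hlast] at hpar
    have huw : u ≠ w := by
      have hmem : p.1 ∈ w4Edges := by
        rw [← hPfst]; exact Multiset.mem_map_of_mem _ hp
      have := hw4nd p.1 hmem
      rw [hp1] at this
      simpa [Sym2.mk_isDiag_iff] using this
    have hiff : ∀ j : Fin 5, φ j = v ↔ j = i := by
      intro j
      constructor
      · intro h; exact hinj (h.trans hφi.symm)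
      · rintro rfl; exact hφi
    rw [hp1]
    simp only [Option.some_inj, hiff] at hpar
    have hind : (if (i : Fin 5) ∈ s(u, w) then (1 : ℕ) else 0)
        = (if u = i then 1 else 0) + (if w = i then 1 else 0) := by
      by_cases hu : u = i <;> by_cases hw : w = i
      · exact absurd (hu.trans hw.symm) huw
      · simp [Sym2.mem_iff, hu, hw]
      · simp [Sym2.mem_iff, hu, hw]
      · simp [Sym2.mem_iff, hu, hw, Ne.symm hu, Ne.symm hw]
    rw [hind]
    rw [Nat.even_iff] at hpar ⊢
    omega
  -- total parity
  have htot : Even (Multiset.countP (fun e => v ∈ e) S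
      + Multiset.countP (fun e => (i : Fin 5) ∈ e) w4Edges) := by
    have h1 : Multiset.countP (fun e => (i : Fin 5) ∈ e) w4Edges
        = (P.map fun p => if (i : Fin 5) ∈ p.1 then 1 else 0).sum := by
      rw [← hPfst, ← sum_map_indicator (fun e => (i : Fin 5) ∈ e) (P.map Prod.fst),
        Multiset.map_map]
      rfl
    have h2 : Multiset.countP (fun e => v ∈ e) S
        = (P.map fun p => Multiset.countP (fun e => v ∈ e) (walkEdges p.2)).sum := by
      rw [hS, countP_sum_map]
    rw [h1, h2, ← Multiset.sum_map_add]
    refine even_multiset_sum _ ?_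
    intro y hy
    obtain ⟨p, hp, rfl⟩ := Multiset.mem_map.mp hy
    exact hper p hp
  -- the terminal i is in exactly 3 edges of W4
  have hcount3 : Multiset.countP (fun e => (i : Fin 5) ∈ e) w4Edges = 3 := by
    fin_cases i
    · exact absurd rfl hi0
    all_goals decide
  rw [hcount3] at htot
  have hodd : ¬ Even (Multiset.countP (fun e => v ∈ e) S) := by
    rw [Nat.even_iff] at htot ⊢; omega
  -- compare with the degree of v
  have hdegp : deg G v = Multiset.countP (fun e => v ∈ e) G.edges :=
    (Multiset.countP_eq_card_filter _ _).symm
  have hle : Multiset.countP (fun e => v ∈ e) S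
      ≤ Multiset.countP (fun e => v ∈ e) G.edges :=
    Multiset.countP_le_of_le _ hPsum
  have hlt : Multiset.countP (fun e => v ∈ e) S
      < Multiset.countP (fun e => v ∈ e) G.edges := by
    rcases lt_or_eq_of_le hle with h | h
    · exact h
    · exact absurd (h ▸ hdegp ▸ hdeg) hodd
  -- find an edge at v, present in G but with smaller multiplicity in S
  have hflt : S.filter (fun e => v ∈ e) < G.edges.filter (fun e => v ∈ e) := by
    refine lt_of_le_of_ne (Multiset.filter_le_filter _ hPsum) ?_
    intro h
    rw [Multiset.countP_eq_card_filter, Multiset.countP_eq_card_filter, h] at hlt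
    exact lt_irrefl _ hlt
  obtain ⟨a, ha⟩ := Multiset.lt_iff_cons_le.mp hflt
  have hamem : a ∈ G.edges.filter (fun e => v ∈ e) :=
    Multiset.mem_of_le ha (Multiset.mem_cons_self a _)
  have haG : a ∈ G.edges := Multiset.mem_of_mem_filter hamem
  have hva : v ∈ a := (Multiset.mem_filter.mp hamem).2
  have hcountlt : Multiset.count a S < Multiset.count a G.edges := by
    have h1 := Multiset.le_iff_count.mp ha a
    rw [Multiset.count_cons_self] at h1
    rw [Multiset.count_filter, if_pos hva] at h1
    rw [Multiset.count_filter, if_pos hva] at h1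
    omega
  have hSle : S ≤ G.edges.erase a := by
    rw [Multiset.le_iff_count]
    intro e
    by_cases hea : e = a
    · subst hea
      rw [Multiset.count_erase_self]
      omega
    · rw [Multiset.count_erase_of_ne hea]
      exact Multiset.le_iff_count.mp hPsum e
  refine ⟨a, haG, hva, φ, h0, hinj, fun w => hverts w, P, hPfst, hPwalk, hSle⟩

end PaperW4
end
end
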